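/- arXiv:1311.2012 — 6 statements merged into one kernel-verified Lean document; each statement's English description precedes it below -/
import Mathlib

section
/- Let A be a real random variable with zero mean and unit variance, and let B be a real random variable independent of A with pdf f_B that is continuously differentiable on (−δ,δ) for some δ > 0. Let M := sup_{t∈(−δ,δ)} max{|f_B(t)|, |f_B′(t)|} and assume M < ∞. Then for every positive integer n, |P[B ≥ A/√n] − P[B ≥ 0]| ≤ (1/n)·(2/δ² + M/δ + M/2). -/
/-!
Write `G x = P[B ≥ x]`, so that `P[B ≥ A/√n] = E[G(A/√n)]` by independence. The law of `B` has
density `f⁺ = max f 0` (`ofReal` clips negative values), so `G' = -f⁺`, which is `M`-Lipschitz on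
`(-δ, δ)`; hence `|G x - G 0 + f⁺(0) x| ≤ M x² / 2` there, while for `|x| ≥ δ` the crude bound
`1 + M |x|` is at most `(1/δ² + M/δ) x²`. With `K = 1/δ² + M/δ + M/2` this gives
`|G x - G 0 + f⁺(0) x| ≤ K x²` on all of `ℝ`, and taking expectations at `x = A/√n` kills the
linear term and leaves `K E[A²] / n`.
-/

open MeasureTheory ProbabilityTheory Set
open scoped Interval

theorem abs_intervalIntegral_sub_mul_le {g : ℝ → ℝ} {a b L : ℝ}
    (hg : IntervalIntegrable g volume a b) (hL : ∀ t ∈ Ι a b, |g t - g a| ≤ L * |t - a|) :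
    |(∫ t in a..b, g t) - g a * (b - a)| ≤ L * (b - a) ^ 2 / 2 := by
  calc |(∫ t in a..b, g t) - g a * (b - a)| = ‖∫ t in Ι a b, (g t - g a)‖ := by
        rw [← intervalIntegral.norm_intervalIntegral_eq, intervalIntegral.integral_sub hg
          intervalIntegrable_const, intervalIntegral.integral_const, smul_eq_mul, mul_comm,
          Real.norm_eq_abs]
    _ ≤ ∫ t in Ι a b, L * |t - a| ^ 1 :=
        norm_integral_le_of_norm_le (Continuous.integrableOn_uIoc (by fun_prop))
          ((ae_restrict_iff' measurableSet_uIoc).mpr (ae_of_all _ fun t ht => by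
            simpa using hL t ht))
    _ = L * (b - a) ^ 2 / 2 := by
        rw [integral_const_mul, integral_pow_abs_sub_uIoc, sq_abs]; ring

theorem ProbabilityTheory.IndepFun.measureReal_le_eq_integral {Ω : Type*}
    {mΩ : MeasurableSpace Ω} {μ : Measure Ω} [IsFiniteMeasure μ] {X Y : Ω → ℝ}
    (hXY : IndepFun X Y μ) (hX : Measurable X) (hY : Measurable Y) :
    μ.real {ω | X ω ≤ Y ω} = ∫ ω, (μ.map Y).real (Ici (X ω)) ∂μ := by
  have hS : MeasurableSet {p : ℝ × ℝ | p.1 ≤ p.2} := measurableSet_le measurable_fst measurable_snd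
  have htail : Measurable fun x => (μ.map Y).real (Ici x) :=
    Antitone.measurable fun _ _ h => measureReal_mono (Ici_subset_Ici.mpr h)
  calc μ.real {ω | X ω ≤ Y ω} = (μ.map fun ω => (X ω, Y ω)).real {p | p.1 ≤ p.2} :=
        (map_measureReal_apply (hX.prodMk hY) hS).symm
    _ = ((μ.map X).prod (μ.map Y)).real {p | p.1 ≤ p.2} := by
        rw [(indepFun_iff_map_prod_eq_prod_map_map hX.aemeasurable hY.aemeasurable).mp hXY]
    _ = ∫ x, (μ.map Y).real (Ici x) ∂(μ.map X) := by
        rw [measureReal_def, Measure.prod_apply hS, ← integral_toReal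
          (measurable_measure_prodMk_left hS).aemeasurable
          (ae_of_all _ fun _ => measure_lt_top _ _)]
        rfl
    _ = ∫ ω, (μ.map Y).real (Ici (X ω)) ∂μ :=
        integral_map hX.aemeasurable htail.aestronglyMeasurable

section Density

variable {f : ℝ → ℝ} {ν : Measure ℝ} {δ M : ℝ}

theorem measureReal_Ico_eq_integral_max
    (hν : ν = volume.withDensity fun x => ENNReal.ofReal (f x)) {a b : ℝ}
    (hf : AEStronglyMeasurable f (volume.restrict (Ico a b))) :
    ν.real (Ico a b) = ∫ t in Ico a b, max (f t) 0 := by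
  rw [integral_eq_lintegral_of_nonneg_ae (f := fun t => max (f t) 0)
    (ae_of_all _ fun _ => le_max_right _ _) (hf.sup aestronglyMeasurable_const), hν,
    measureReal_def, withDensity_apply _ measurableSet_Ico]
  simp

theorem measureReal_Ici_sub_measureReal_Ici_eq_intervalIntegral [IsFiniteMeasure ν]
    (hν : ν = volume.withDensity fun x => ENNReal.ofReal (f x)) {a b : ℝ}
    (hf : ContinuousOn f (uIcc a b)) :
    ν.real (Ici a) - ν.real (Ici b) = ∫ t in a..b, max (f t) 0 := by
  wlog hab : a ≤ b generalizing a b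
  · rw [intervalIntegral.integral_symm, ← this (uIcc_comm a b ▸ hf) (le_of_not_ge hab), neg_sub]
  have hsplit : ν.real (Ici a) = ν.real (Ico a b) + ν.real (Ici b) := by
    rw [← measureReal_union ((Iio_disjoint_Ici le_rfl).mono_left Ico_subset_Iio_self)
      measurableSet_Ici, Ico_union_Ici_eq_Ici hab]
  have hmeas : AEStronglyMeasurable f (volume.restrict (Ico a b)) :=
    (hf.aestronglyMeasurable measurableSet_uIcc).mono_set
      (Ico_subset_Icc_self.trans Icc_subset_uIcc)
  rw [hsplit, add_sub_cancel_right, measureReal_Ico_eq_integral_max hν hmeas,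
    intervalIntegral.integral_of_le hab, integral_Ico_eq_integral_Ioc]

theorem abs_measureReal_Ici_sub_add_mul_le_of_mem_Ioo [IsFiniteMeasure ν]
    (hν : ν = volume.withDensity fun x => ENNReal.ofReal (f x))
    (hf : DifferentiableOn ℝ f (Ioo (-δ) δ)) (hf' : ∀ t ∈ Ioo (-δ) δ, |deriv f t| ≤ M)
    {x : ℝ} (hx : x ∈ Ioo (-δ) δ) :
    |ν.real (Ici x) - ν.real (Ici 0) + max (f 0) 0 * x| ≤ M * x ^ 2 / 2 := by
  have h0 : (0 : ℝ) ∈ Ioo (-δ) δ := ⟨by linarith [hx.1, hx.2], by linarith [hx.1, hx.2]⟩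
  have hsub : uIcc 0 x ⊆ Ioo (-δ) δ := ordConnected_Ioo.uIcc_subset h0 hx
  have hlip : ∀ t ∈ Ioo (-δ) δ, ‖f t - f 0‖ ≤ M * ‖t - 0‖ :=
    fun t ht => (convex_Ioo _ _).norm_image_sub_le_of_norm_deriv_le
      (fun y hy => hf.differentiableAt (isOpen_Ioo.mem_nhds hy)) hf' h0 ht
  have hcont : ContinuousOn f (uIcc 0 x) := hf.continuousOn.mono hsub
  have hquad := abs_intervalIntegral_sub_mul_le (g := fun t => max (f t) 0)
    (hcont.sup continuousOn_const).intervalIntegrable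
    fun t ht => (abs_max_sub_max_le_abs _ _ _).trans (hlip t (hsub (uIoc_subset_uIcc ht)))
  rw [← measureReal_Ici_sub_measureReal_Ici_eq_intervalIntegral hν hcont, sub_zero] at hquad
  rwa [← abs_neg, neg_add, neg_sub]

theorem abs_measureReal_Ici_sub_add_mul_le [IsProbabilityMeasure ν]
    (hν : ν = volume.withDensity fun x => ENNReal.ofReal (f x)) (hδ : 0 < δ)
    (hf : DifferentiableOn ℝ f (Ioo (-δ) δ)) (hf' : ∀ t ∈ Ioo (-δ) δ, |deriv f t| ≤ M)
    (hf0 : |f 0| ≤ M) (x : ℝ) :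
    |ν.real (Ici x) - ν.real (Ici 0) + max (f 0) 0 * x| ≤
      (1 / δ ^ 2 + M / δ + M / 2) * x ^ 2 := by
  have hM : 0 ≤ M := (abs_nonneg _).trans hf0
  by_cases hx : x ∈ Ioo (-δ) δ
  · calc _ ≤ M * x ^ 2 / 2 := abs_measureReal_Ici_sub_add_mul_le_of_mem_Ioo hν hf hf' hx
      _ ≤ (1 / δ ^ 2 + M / δ + M / 2) * x ^ 2 := by
        have : 0 ≤ (1 / δ ^ 2 + M / δ) * x ^ 2 := by positivity
        linarith
  have hδx : δ ≤ |x| := by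
    rw [mem_Ioo, not_and_or, not_lt, not_lt] at hx
    rcases hx with hx | hx
    · linarith [neg_le_abs x]
    · linarith [le_abs_self x]
  have hone : |ν.real (Ici x) - ν.real (Ici 0)| ≤ 1 := by
    rw [abs_sub_le_iff]
    constructor <;> linarith [measureReal_nonneg (μ := ν) (s := Ici x),
      measureReal_nonneg (μ := ν) (s := Ici 0), measureReal_le_one (μ := ν) (s := Ici x),
      measureReal_le_one (μ := ν) (s := Ici 0)]
  have hc : |max (f 0) 0| ≤ M :=
    abs_le.mpr ⟨by linarith [le_max_right (f 0) 0], max_le ((le_abs_self _).trans hf0) hM⟩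
  have hsq : δ ^ 2 ≤ x ^ 2 := by rw [← sq_abs x]; gcongr
  calc _ ≤ |ν.real (Ici x) - ν.real (Ici 0)| + |max (f 0) 0| * |x| := by
        rw [← abs_mul]; exact abs_add_le _ _
    _ ≤ x ^ 2 / δ ^ 2 + M * (x ^ 2 / δ) := by
        gcongr
        · exact hone.trans ((one_le_div (by positivity)).mpr hsq)
        · rw [le_div_iff₀ hδ, sq, ← abs_mul_abs_self x]
          exact mul_le_mul_of_nonneg_left hδx (abs_nonneg x)
    _ = (1 / δ ^ 2 + M / δ) * x ^ 2 := by ring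
    _ ≤ (1 / δ ^ 2 + M / δ + M / 2) * x ^ 2 := by
        gcongr ?_ * _
        exact le_add_of_nonneg_right (by positivity)

end Density

theorem abs_integral_comp_sub_le_mul_integral_sq {Ω : Type*} {mΩ : MeasurableSpace Ω}
    {μ : Measure Ω} [IsProbabilityMeasure μ] {X : Ω → ℝ} {φ : ℝ → ℝ} {c K : ℝ}
    (hφ : Measurable φ) (hX : Integrable X μ) (hX2 : Integrable (fun ω => X ω ^ 2) μ)
    (hmean : ∫ ω, X ω ∂μ = 0) (hbound : ∀ x, |φ x - φ 0 + c * x| ≤ K * x ^ 2) :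
    |(∫ ω, φ (X ω) ∂μ) - φ 0| ≤ K * ∫ ω, X ω ^ 2 ∂μ := by
  have hψ : Integrable (fun ω => φ (X ω) - φ 0 + c * X ω) μ :=
    (hX2.const_mul K).mono' (((hφ.comp_aemeasurable hX.aemeasurable).sub_const _).add
      (hX.aemeasurable.const_mul c)).aestronglyMeasurable (ae_of_all _ fun ω => hbound (X ω))
  have hφX : Integrable (fun ω => φ (X ω)) μ :=
    ((hψ.sub (hX.const_mul c)).add (integrable_const (φ 0))).congr
      (ae_of_all _ fun ω => by simp only [Pi.add_apply, Pi.sub_apply]; ring)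
  calc |(∫ ω, φ (X ω) ∂μ) - φ 0| = ‖∫ ω, (φ (X ω) - φ 0 + c * X ω) ∂μ‖ := by
        rw [integral_add (f := fun ω => φ (X ω) - φ 0) (hφX.sub (integrable_const _))
          (hX.const_mul c), integral_const_mul, hmean, mul_zero, add_zero,
          integral_sub hφX (integrable_const _), integral_const,
          probReal_univ, one_smul, Real.norm_eq_abs]
    _ ≤ ∫ ω, K * X ω ^ 2 ∂μ :=
        norm_integral_le_of_norm_le (hX2.const_mul K) (ae_of_all _ fun ω => hbound (X ω))
    _ = K * ∫ ω, X ω ^ 2 ∂μ := integral_const_mul K _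

/-- Speed of convergence of `P[B ≥ A/√n]` to `P[B ≥ 0]`: if `A` has zero mean and unit
variance, `B` is independent of `A` with pdf `f` that is continuously differentiable
on `(−δ,δ)` and bounded there, together with its derivative, by `M`, then
`|P[B ≥ A/√n] − P[B ≥ 0]| ≤ (1/n)(2/δ² + M/δ + M/2)`. -/
theorem abs_prob_ge_div_sqrt_sub_prob_ge_zero_le
    {Ω : Type*} [MeasureSpace Ω] [IsProbabilityMeasure (ℙ : Measure Ω)]
    (A B : Ω → ℝ) (hmA : Measurable A) (hmB : Measurable B)
    (hindep : ProbabilityTheory.IndepFun A B ℙ)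
    (hmean : ∫ ω, A ω ∂ℙ = 0) (hvar : ∫ ω, (A ω) ^ 2 ∂ℙ = 1)
    (f : ℝ → ℝ)
    (hpdf : Measure.map B ℙ = volume.withDensity fun x => ENNReal.ofReal (f x))
    (δ : ℝ) (hδ : 0 < δ) (hf : ContDiffOn ℝ 1 f (Ioo (-δ) δ))
    (M : ℝ) (hM : ∀ t ∈ Ioo (-δ) δ, max |f t| |deriv f t| ≤ M) :
    ∀ n : ℕ, 0 < n →
      abs (((ℙ : Measure Ω) {ω | A ω / Real.sqrt n ≤ B ω}).toReal
          - ((ℙ : Measure Ω) {ω | 0 ≤ B ω}).toReal)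
        ≤ (1 / n) * (2 / δ ^ 2 + M / δ + M / 2) := by
  intro n _
  set ν := (ℙ : Measure Ω).map B
  have : IsProbabilityMeasure ν := Measure.isProbabilityMeasure_map hmB.aemeasurable
  have hA2 : Integrable (fun ω => A ω ^ 2) ℙ := by
    by_contra h
    simp [integral_undef h] at hvar
  have hA : Integrable A ℙ :=
    ((memLp_two_iff_integrable_sq hmA.aestronglyMeasurable).mpr hA2).integrable one_le_two
  have hsqrt : Real.sqrt n ^ 2 = n := Real.sq_sqrt n.cast_nonneg
  have hXB : IndepFun (fun ω => A ω / Real.sqrt n) B ℙ :=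
    hindep.comp (φ := fun a => a / Real.sqrt n) (ψ := id) (measurable_id.div_const _) measurable_id
  have hquad := abs_measureReal_Ici_sub_add_mul_le hpdf hδ (hf.differentiableOn one_ne_zero)
    (fun t ht => (le_max_right _ _).trans (hM t ht))
    ((le_max_left _ _).trans (hM 0 ⟨neg_lt_zero.mpr hδ, hδ⟩))
  have hzero : (ℙ : Measure Ω).real {ω | 0 ≤ B ω} = ν.real (Ici 0) :=
    (map_measureReal_apply hmB measurableSet_Ici).symm
  rw [← measureReal_def, ← measureReal_def, hXB.measureReal_le_eq_integral (hmA.div_const _) hmB,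
    hzero]
  calc _ ≤ (1 / δ ^ 2 + M / δ + M / 2) * ∫ ω, (A ω / Real.sqrt n) ^ 2 ∂ℙ :=
        abs_integral_comp_sub_le_mul_integral_sq
          (Antitone.measurable fun _ _ h => measureReal_mono (Ici_subset_Ici.mpr h))
          (hA.div_const _)
          ((hA2.div_const n).congr (ae_of_all _ fun _ => by simp [div_pow, hsqrt]))
          (by rw [integral_div, hmean, zero_div]) hquad
    _ = (1 / n) * (1 / δ ^ 2 + M / δ + M / 2) := by
        simp only [div_pow, hsqrt, integral_div, hvar]; ring
    _ ≤ (1 / n) * (2 / δ ^ 2 + M / δ + M / 2) := by gcongr; norm_num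
end

section
/- Let n > t + r be positive integers and let B1,…,B_r be independent random variables with B_j ∼ Beta(n − t − j + 1, t). Then for every γ ∈ (0,1], P[∏_{j=1}^r B_j ≤ γ] ≤ n^{rt} · γ^{n−t−r}. -/
open MeasureTheory ProbabilityTheory

noncomputable section

/-- The density of the Beta distribution with parameters `a, b > 0`. -/
def betaPDFReal (a b : ℝ) (x : ℝ) : ℝ :=
  if 0 < x ∧ x < 1 then
    Real.Gamma (a + b) / (Real.Gamma a * Real.Gamma b) * x ^ (a - 1) * (1 - x) ^ (b - 1)
  else 0

/-- The Beta distribution with parameters `a, b > 0`, as a measure on `ℝ`. -/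
def betaMeasure (a b : ℝ) : Measure ℝ :=
  volume.withDensity fun x => ENNReal.ofReal (_root_.betaPDFReal a b x)

end

open Nat

lemma betaPDF_measurable (a b : ℝ) :
    Measurable (fun x => ENNReal.ofReal (_root_.betaPDFReal a b x)) := by
  apply Measurable.ennreal_ofReal
  unfold _root_.betaPDFReal
  have hset : MeasurableSet {x : ℝ | 0 < x ∧ x < 1} := by
    rw [show {x : ℝ | 0 < x ∧ x < 1} = Set.Ioo 0 1 from rfl]; exact measurableSet_Ioo
  refine Measurable.ite hset ?_ measurable_const
  have h1 : Measurable (fun x : ℝ => x ^ (a - 1)) := by measurability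
  have h2' : Measurable (fun y : ℝ => y ^ (b - 1)) := by measurability
  have h2 : Measurable (fun x : ℝ => (1 - x) ^ (b - 1)) :=
    h2'.comp (measurable_const.sub measurable_id)
  exact ((h1.const_mul _).mul h2)

lemma betaMeasure_zero_right (a : ℝ) : _root_.betaMeasure a 0 = 0 := by
  unfold _root_.betaMeasure
  have h : (fun x => ENNReal.ofReal (_root_.betaPDFReal a 0 x)) = 0 := by
    funext x; simp [_root_.betaPDFReal, Real.Gamma_zero]
  rw [h, withDensity_zero]

lemma aux_lintegral_prod {Ω : Type*} [MeasureSpace Ω] [IsProbabilityMeasure (ℙ : Measure Ω)]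
    {ι : Type*} (f : ι → Ω → ENNReal)
    (hindep : iIndepFun f ℙ) (hmeas : ∀ i, Measurable (f i))
    (s : Finset ι) :
    ∫⁻ ω, ∏ i ∈ s, f i ω ∂ℙ = ∏ i ∈ s, ∫⁻ ω, f i ω ∂ℙ := by
  classical
  induction s using Finset.induction with
  | empty => simp
  | @insert a s ha ih =>
    have hprod : Measurable (∏ j ∈ s, f j) := by
      rw [show (∏ j ∈ s, f j) = fun ω => ∏ j ∈ s, f j ω from by ext ω; simp [Finset.prod_apply]]
      exact Finset.measurable_prod s (fun i _ => hmeas i)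
    have hi : IndepFun (∏ j ∈ s, f j) (f a) ℙ :=
      hindep.indepFun_finsetProd_of_notMem hmeas ha
    have key := lintegral_mul_eq_lintegral_mul_lintegral_of_indepFun hprod (hmeas a) hi
    simp only [Pi.mul_apply, Finset.prod_apply] at key
    calc ∫⁻ ω, ∏ i ∈ insert a s, f i ω ∂ℙ
        = ∫⁻ ω, (∏ i ∈ s, f i ω) * f a ω ∂ℙ := by
          simp_rw [Finset.prod_insert ha, mul_comm]
      _ = (∫⁻ ω, ∏ i ∈ s, f i ω ∂ℙ) * ∫⁻ ω, f a ω ∂ℙ := key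
      _ = ∏ i ∈ insert a s, ∫⁻ ω, f i ω ∂ℙ := by
          rw [ih, Finset.prod_insert ha, mul_comm]

lemma aux_beta_bound {n t r : ℕ} (ht : 1 ≤ t) (hn : t + r < n) {j : ℕ} (hj : j < r) :
    ∫⁻ x, ENNReal.ofReal (_root_.betaPDFReal ((n : ℝ) - t - j - 1 + 1) t x)
        * ((ENNReal.ofReal x)⁻¹) ^ (n - t - r) ∂volume
      ≤ ENNReal.ofReal ((n : ℝ) ^ t) := by
  set A : ℕ := n - t - j with hA
  set s : ℕ := n - t - r with hs
  set k : ℕ := r - 1 - j with hk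
  have hA1 : 1 ≤ A := by omega
  have hAk : A - 1 = k + s := by omega
  have ha : (n : ℝ) - t - j - 1 + 1 = (A : ℝ) := by
    have : ((A : ℕ) : ℝ) = (n : ℝ) - t - j := by
      rw [hA, Nat.cast_sub (by omega), Nat.cast_sub (by omega)]
    rw [this]; ring
  set C : ℝ := ((n - j - 1)! : ℝ) / (((A - 1)! : ℝ) * ((t - 1)! : ℝ)) with hC
  have hC0 : 0 ≤ C := by positivity
  have hG1 : Real.Gamma ((A : ℝ) + t) = ((n - j - 1)! : ℝ) := by
    have e : (A : ℝ) + t = ((n - j - 1 : ℕ) : ℝ) + 1 := by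
      have h' : A + t = (n - j - 1) + 1 := by omega
      exact_mod_cast congrArg (Nat.cast (R := ℝ)) h'
    rw [e, Real.Gamma_nat_eq_factorial]
  have hG2 : Real.Gamma ((A : ℝ)) = ((A - 1)! : ℝ) := by
    have e : (A : ℝ) = ((A - 1 : ℕ) : ℝ) + 1 := by
      have h' : A = (A - 1) + 1 := by omega
      exact_mod_cast congrArg (Nat.cast (R := ℝ)) h'
    rw [e, Real.Gamma_nat_eq_factorial]
  have hG3 : Real.Gamma ((t : ℝ)) = ((t - 1)! : ℝ) := by
    have e : (t : ℝ) = ((t - 1 : ℕ) : ℝ) + 1 := by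
      have h' : t = (t - 1) + 1 := by omega
      exact_mod_cast congrArg (Nat.cast (R := ℝ)) h'
    rw [e, Real.Gamma_nat_eq_factorial]
  have hCn : C ≤ (n : ℝ) ^ t := by
    rw [hC, div_le_iff₀ (by positivity)]
    have hnat : (n - j - 1)! ≤ n ^ t * ((A - 1)! * (t - 1)!) := by
      set N := n - j - 1 with hN
      have htN : t ≤ N := by omega
      calc N ! = (A - 1)! * N.descFactorial t := by
            rw [show A - 1 = N - t by omega]
            rw [Nat.factorial_mul_descFactorial htN]
        _ ≤ (A - 1)! * n ^ t := Nat.mul_le_mul_left _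
            ((Nat.descFactorial_le_pow N t).trans (Nat.pow_le_pow_left (by omega) t))
        _ = n ^ t * (A - 1)! := by ring
        _ ≤ n ^ t * ((A - 1)! * (t - 1)!) :=
            Nat.mul_le_mul_left _ (Nat.le_mul_of_pos_right _ (Nat.factorial_pos _))
    exact_mod_cast hnat
  have hpt : ∀ x : ℝ, ENNReal.ofReal (_root_.betaPDFReal ((n : ℝ) - t - j - 1 + 1) t x)
      * ((ENNReal.ofReal x)⁻¹) ^ s
      ≤ Set.indicator (Set.Ioo 0 1) (fun _ => ENNReal.ofReal C) x := by
    intro x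
    by_cases hx : 0 < x ∧ x < 1
    · rw [Set.indicator_of_mem (show x ∈ Set.Ioo (0:ℝ) 1 from ⟨hx.1, hx.2⟩)]
      have h1x : 0 < 1 - x := by linarith [hx.2]
      have hpow : x ^ ((A : ℝ) - 1) = x ^ (A - 1 : ℕ) := by
        rw [show (A : ℝ) - 1 = ((A - 1 : ℕ) : ℝ) by
          rw [Nat.cast_sub hA1]; norm_num]
        exact Real.rpow_natCast x (A - 1)
      have e1 : (1 - x) ^ ((t : ℝ) - 1) ≤ 1 :=
        Real.rpow_le_one h1x.le (by linarith [hx.1]) (by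
          have : (1 : ℝ) ≤ (t : ℝ) := by exact_mod_cast ht
          linarith)
      have e1' : 0 < (1 - x) ^ ((t : ℝ) - 1) := Real.rpow_pos_of_pos h1x _
      have hpdf : _root_.betaPDFReal ((n : ℝ) - t - j - 1 + 1) t x
          = C * x ^ (A - 1 : ℕ) * (1 - x) ^ ((t : ℝ) - 1) := by
        rw [ha, _root_.betaPDFReal, if_pos hx, hG1, hG2, hG3, hpow, hC]
      rw [hpdf, ← ENNReal.ofReal_inv_of_pos hx.1,
        ← ENNReal.ofReal_pow (inv_nonneg.2 hx.1.le),
        ← ENNReal.ofReal_mul (by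
          have := mul_nonneg (mul_nonneg hC0 (pow_nonneg hx.1.le (A - 1))) e1'.le
          exact this)]
      apply ENNReal.ofReal_le_ofReal
      have e2 : x ^ (A - 1 : ℕ) * (x⁻¹) ^ s = x ^ k := by
        rw [hAk, pow_add, mul_assoc, ← mul_pow, mul_inv_cancel₀ (ne_of_gt hx.1), one_pow,
          mul_one]
      have e3 : x ^ k ≤ 1 := pow_le_one₀ hx.1.le hx.2.le
      calc C * x ^ (A - 1 : ℕ) * (1 - x) ^ ((t : ℝ) - 1) * (x⁻¹) ^ s
          = C * (1 - x) ^ ((t : ℝ) - 1) * (x ^ (A - 1 : ℕ) * (x⁻¹) ^ s) := by ring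
        _ = C * (1 - x) ^ ((t : ℝ) - 1) * x ^ k := by rw [e2]
        _ ≤ C * 1 * 1 := by
            apply mul_le_mul (mul_le_mul le_rfl e1 e1'.le hC0) e3 (pow_nonneg hx.1.le k)
            positivity
        _ = C := by ring
    · have : _root_.betaPDFReal ((n : ℝ) - t - j - 1 + 1) t x = 0 := by
        rw [_root_.betaPDFReal, if_neg hx]
      rw [this, ENNReal.ofReal_zero, zero_mul]
      exact _root_.zero_le
  calc ∫⁻ x, ENNReal.ofReal (_root_.betaPDFReal ((n : ℝ) - t - j - 1 + 1) t x)
        * ((ENNReal.ofReal x)⁻¹) ^ s ∂volume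
      ≤ ∫⁻ x, Set.indicator (Set.Ioo 0 1) (fun _ => ENNReal.ofReal C) x ∂volume :=
        lintegral_mono hpt
    _ = ENNReal.ofReal C * volume (Set.Ioo (0:ℝ) 1) := by
        rw [lintegral_indicator measurableSet_Ioo, setLIntegral_const]
    _ = ENNReal.ofReal C := by simp [Real.volume_Ioo]
    _ ≤ ENNReal.ofReal ((n : ℝ) ^ t) := ENNReal.ofReal_le_ofReal hCn

/-- If `B₁,…,B_r` are independent with `B_j ∼ Beta(n−t−j+1, t)` and `n > t + r`,
then `P[∏_j B_j ≤ γ] ≤ n^{rt} γ^{n−t−r}` for every `γ ∈ (0,1]`. -/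
theorem prob_prod_beta_le {Ω : Type*} [MeasureSpace Ω]
    [IsProbabilityMeasure (ℙ : Measure Ω)]
    {n t r : ℕ} (hn : t + r < n) (B : Fin r → Ω → ℝ)
    (hmeas : ∀ j, Measurable (B j))
    (hindep : iIndepFun B ℙ)
    (hdist : ∀ j : Fin r,
      Measure.map (B j) ℙ = _root_.betaMeasure ((n : ℝ) - t - (j : ℕ) - 1 + 1) t)
    (γ : ℝ) (hγ : γ ∈ Set.Ioc (0:ℝ) 1) :
    ((ℙ : Measure Ω) {ω | ∏ j, B j ω ≤ γ}).toReal
      ≤ (n : ℝ) ^ (r * t) * γ ^ (n - t - r) := by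
  obtain ⟨hγ0, hγ1⟩ := hγ
  rcases Nat.eq_zero_or_pos r with hr0 | hrpos
  · subst hr0
    have hset : {ω : Ω | ∏ j, B j ω ≤ γ} = {ω : Ω | (1:ℝ) ≤ γ} := by
      ext ω; simp
    rcases eq_or_lt_of_le hγ1 with h1 | h1
    · subst h1
      rw [hset, show {ω : Ω | (1:ℝ) ≤ 1} = (Set.univ : Set Ω) by simp, measure_univ]
      norm_num
    · have hempty : {ω : Ω | (1:ℝ) ≤ γ} = ∅ := by
        ext ω; simp only [Set.mem_setOf_eq, Set.mem_empty_iff_false, iff_false, not_le]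
        exact h1
      rw [hset, hempty, measure_empty]
      simp only [ENNReal.toReal_zero]
      exact mul_nonneg (pow_nonneg (Nat.cast_nonneg n) _) (pow_nonneg hγ0.le _)
  -- main case : r ≥ 1
  have ht : 1 ≤ t := by
    by_contra ht0
    have ht0 : t = 0 := by omega
    set j0 : Fin r := ⟨0, hrpos⟩
    have hmap : IsProbabilityMeasure (Measure.map (B j0) ℙ) :=
      Measure.isProbabilityMeasure_map (hmeas j0).aemeasurable
    subst ht0
    rw [hdist j0, Nat.cast_zero, betaMeasure_zero_right] at hmap
    have h01 : (0 : Measure ℝ) Set.univ = 1 := hmap.measure_univ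
    simp only [Measure.coe_zero, Pi.zero_apply] at h01
    exact zero_ne_one h01
  -- notation
  set s : ℕ := n - t - r with hs
  have hs1 : 1 ≤ s := by omega
  set g : ℝ → ENNReal := fun x => ((ENNReal.ofReal x)⁻¹) ^ s with hgdef
  have hgmeas : Measurable g := (ENNReal.measurable_ofReal.inv).pow_const s
  have hfm : ∀ j : Fin r, Measurable (fun ω => g (B j ω)) := fun j => hgmeas.comp (hmeas j)
  have hcomp : iIndepFun (fun j => g ∘ B j) ℙ :=
    hindep.comp (fun _ => g) (fun _ => hgmeas)
  set ε : ENNReal := ENNReal.ofReal ((γ ^ s)⁻¹) with hε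
  have hγs : 0 < γ ^ s := pow_pos hγ0 _
  -- inclusion of events
  have hsub : {ω : Ω | ∏ j, B j ω ≤ γ} ⊆ {ω : Ω | ε ≤ ∏ j, g (B j ω)} := by
    intro ω hω
    simp only [Set.mem_setOf_eq] at hω ⊢
    by_cases hpos : ∀ j, 0 < B j ω
    · have e : ∀ j : Fin r, g (B j ω) = ENNReal.ofReal ((B j ω)⁻¹ ^ s) := fun j => by
        show (ENNReal.ofReal (B j ω))⁻¹ ^ s = _
        rw [← ENNReal.ofReal_inv_of_pos (hpos j),
          ← ENNReal.ofReal_pow (inv_nonneg.2 (hpos j).le)]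
      rw [Finset.prod_congr rfl (fun j _ => e j),
        ← ENNReal.ofReal_prod_of_nonneg (fun j _ => pow_nonneg (inv_nonneg.2 (hpos j).le) s)]
      apply ENNReal.ofReal_le_ofReal
      have hprodpos : 0 < ∏ j, B j ω := Finset.prod_pos (fun j _ => hpos j)
      have hq : ∏ j : Fin r, (B j ω)⁻¹ ^ s = ((∏ j, B j ω) ^ s)⁻¹ := by
        rw [Finset.prod_pow, Finset.prod_inv_distrib, inv_pow]
      rw [hq]
      exact inv_anti₀ (pow_pos hprodpos s) (pow_le_pow_left₀ hprodpos.le hω s)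
    · push_neg at hpos
      obtain ⟨j0, hj0⟩ := hpos
      have htop : g (B j0 ω) = ⊤ := by
        show (ENNReal.ofReal (B j0 ω))⁻¹ ^ s = ⊤
        have h0 : ENNReal.ofReal (B j0 ω) = 0 := ENNReal.ofReal_eq_zero.2 hj0
        rw [h0, ENNReal.inv_zero, ENNReal.top_pow (show s ≠ 0 by omega)]
      have hne : ∀ j : Fin r, g (B j ω) ≠ 0 := fun j => by
        show (ENNReal.ofReal (B j ω))⁻¹ ^ s ≠ 0
        apply pow_ne_zero
        rw [Ne, ENNReal.inv_eq_zero]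
        exact ENNReal.ofReal_ne_top
      have hprodtop : ∏ j, g (B j ω) = ⊤ := by
        rw [← Finset.prod_erase_mul Finset.univ _ (Finset.mem_univ j0), htop,
          ENNReal.mul_top (Finset.prod_ne_zero_iff.2 (fun j _ => hne j))]
      rw [hprodtop]
      exact le_top
  -- per-factor bound
  have hint : ∀ j : Fin r, ∫⁻ ω, g (B j ω) ∂ℙ ≤ ENNReal.ofReal ((n : ℝ) ^ t) := by
    intro j
    rw [← lintegral_map hgmeas (hmeas j), hdist j]
    unfold _root_.betaMeasure
    rw [lintegral_withDensity_eq_lintegral_mul _ (betaPDF_measurable _ _) hgmeas]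
    simp only [Pi.mul_apply, hgdef, hs]
    exact aux_beta_bound ht hn j.2
  -- Markov
  have hmarkov := mul_meas_ge_le_lintegral (μ := (ℙ : Measure Ω))
    (show Measurable fun ω => ∏ j, g (B j ω) from
      Finset.measurable_prod Finset.univ (fun j _ => hfm j)) ε
  have hprodint : ∫⁻ ω, ∏ j, g (B j ω) ∂ℙ = ∏ j, ∫⁻ ω, g (B j ω) ∂ℙ :=
    aux_lintegral_prod (fun j => g ∘ B j) hcomp (fun j => hfm j) Finset.univ
  have hbound : ∏ j : Fin r, ∫⁻ ω, g (B j ω) ∂ℙ ≤ ENNReal.ofReal ((n : ℝ) ^ (r * t)) := by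
    calc ∏ j : Fin r, ∫⁻ ω, g (B j ω) ∂ℙ
        ≤ ∏ _j : Fin r, ENNReal.ofReal ((n : ℝ) ^ t) :=
          Finset.prod_le_prod' (fun j _ => hint j)
      _ = ENNReal.ofReal ((n : ℝ) ^ t) ^ r := by
          rw [Finset.prod_const, Finset.card_univ, Fintype.card_fin]
      _ = ENNReal.ofReal (((n : ℝ) ^ t) ^ r) := (ENNReal.ofReal_pow (by positivity) r).symm
      _ = ENNReal.ofReal ((n : ℝ) ^ (r * t)) := by rw [← pow_mul, mul_comm]
  have hchain : ε * (ℙ : Measure Ω) {ω | ∏ j, B j ω ≤ γ} ≤ ENNReal.ofReal ((n : ℝ) ^ (r * t)) :=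
    calc ε * (ℙ : Measure Ω) {ω | ∏ j, B j ω ≤ γ}
        ≤ ε * (ℙ : Measure Ω) {ω | ε ≤ ∏ j, g (B j ω)} := mul_le_mul_right (measure_mono hsub) ε
      _ ≤ ∫⁻ ω, ∏ j, g (B j ω) ∂ℙ := hmarkov
      _ = ∏ j, ∫⁻ ω, g (B j ω) ∂ℙ := hprodint
      _ ≤ ENNReal.ofReal ((n : ℝ) ^ (r * t)) := hbound
  have hone : ENNReal.ofReal (γ ^ s) * ε = 1 := by
    rw [hε, ← ENNReal.ofReal_mul hγs.le, mul_inv_cancel₀ (ne_of_gt hγs), ENNReal.ofReal_one]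
  have hP : (ℙ : Measure Ω) {ω | ∏ j, B j ω ≤ γ}
      ≤ ENNReal.ofReal ((n : ℝ) ^ (r * t) * γ ^ s) :=
    calc (ℙ : Measure Ω) {ω | ∏ j, B j ω ≤ γ}
        = 1 * (ℙ : Measure Ω) {ω | ∏ j, B j ω ≤ γ} := (one_mul _).symm
      _ = ENNReal.ofReal (γ ^ s) * ε * (ℙ : Measure Ω) {ω | ∏ j, B j ω ≤ γ} := by rw [hone]
      _ = ENNReal.ofReal (γ ^ s) * (ε * (ℙ : Measure Ω) {ω | ∏ j, B j ω ≤ γ}) := mul_assoc _ _ _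
      _ ≤ ENNReal.ofReal (γ ^ s) * ENNReal.ofReal ((n : ℝ) ^ (r * t)) :=
          mul_le_mul_right hchain _
      _ = ENNReal.ofReal ((n : ℝ) ^ (r * t) * γ ^ s) := by
          rw [← ENNReal.ofReal_mul hγs.le, mul_comm]
  exact ENNReal.toReal_le_of_le_ofReal
    (mul_nonneg (pow_nonneg (Nat.cast_nonneg n) _) (pow_nonneg hγ0.le _)) hP
end

section
/- Let Q and Q′ be t×t positive semidefinite complex matrices and H ∈ ℂ^{t×r}. Then det(I_r + Hᴴ Q′ H) ≤ det(I_r + Hᴴ Q H) · (1 + √r · ‖Q′ − Q‖_F · ‖H‖_F²)^r. -/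
open Matrix
open scoped ComplexOrder

noncomputable section

/-- The Frobenius norm of a complex matrix. -/
def frob {m k : Type*} [Fintype m] [Fintype k] (A : Matrix m k ℂ) : ℝ :=
  Real.sqrt (∑ i, ∑ j, ‖A i j‖ ^ 2)

end

/-!
Factor `1 + HᴴQ′H = (1 + HᴴQH)(1 + C)` with `C = (1 + HᴴQH)⁻¹ Hᴴ(Q′ − Q)H`. The first factor has
a positive real determinant. For the second, AM–GM applied to the eigenvalues of `BBᴴ` gives
`|det B| ≤ (‖B‖_F / √r)^r`, hence `|det (1 + C)| ≤ (1 + ‖C‖_F)^r`. Finally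
`‖C‖_F ≤ √r ‖Q′ − Q‖_F ‖H‖_F²`, since `N = (1 + HᴴQH)⁻¹` satisfies `NNᴴ ≤ 1` and so
`‖N‖_F² = tr (NNᴴ) ≤ r`.
-/

theorem Real.prod_le_sum_div_card_pow {ι : Type*} [Fintype ι] (z : ι → ℝ) (hz : ∀ i, 0 ≤ z i) :
    ∏ i, z i ≤ ((∑ i, z i) / Fintype.card ι) ^ Fintype.card ι := by
  rcases isEmpty_or_nonempty ι with hι | hι
  · simp
  have hcard : Fintype.card ι ≠ 0 := Fintype.card_ne_zero
  have amgm := Real.geom_mean_le_arith_mean Finset.univ (fun _ ↦ 1) z (fun _ _ ↦ zero_le_one)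
    (by simp [Nat.pos_of_ne_zero hcard]) (fun i _ ↦ hz i)
  simp only [Real.rpow_one, one_mul, Finset.sum_const, Finset.card_univ, nsmul_eq_mul,
    mul_one] at amgm
  calc ∏ i, z i = ((∏ i, z i) ^ ((Fintype.card ι : ℝ)⁻¹)) ^ Fintype.card ι :=
        (Real.rpow_inv_natCast_pow (Finset.prod_nonneg fun i _ ↦ hz i) hcard).symm
    _ ≤ _ := by gcongr; exact Real.rpow_nonneg (Finset.prod_nonneg fun i _ ↦ hz i) _

attribute [local instance] Matrix.frobeniusSeminormedAddCommGroup

lemma frob_eq_norm {m k : Type*} [Fintype m] [Fintype k] (A : Matrix m k ℂ) :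
    frob A = ‖A‖ := by
  simp only [frob, frobenius_norm_def, Real.sqrt_eq_rpow, Real.rpow_two]

namespace Matrix

variable {𝕜 n : Type*} [RCLike 𝕜] [Fintype n]

theorem frobenius_norm_sq_eq_sum {m : Type*} [Fintype m] (A : Matrix m n 𝕜) :
    ‖A‖ ^ 2 = ∑ i, ∑ j, ‖A i j‖ ^ 2 := by
  rw [frobenius_norm_def, ← Real.rpow_natCast, ← Real.rpow_mul (by positivity)]
  norm_num

theorem trace_mul_conjTranspose_self {m : Type*} [Fintype m] (A : Matrix m n 𝕜) :
    trace (A * Aᴴ) = (‖A‖ ^ 2 : ℝ) := by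
  simp only [frobenius_norm_sq_eq_sum, trace, diag, mul_apply, conjTranspose_apply,
    RCLike.star_def, RCLike.mul_conj]
  push_cast
  rfl

variable [DecidableEq n]

theorem norm_det_sq_le (A : Matrix n n 𝕜) :
    ‖A.det‖ ^ 2 ≤ (‖A‖ ^ 2 / Fintype.card n) ^ Fintype.card n := by
  have hK := posSemidef_self_mul_conjTranspose A
  calc ‖A.det‖ ^ 2 = ∏ i, hK.1.eigenvalues i := by
        apply RCLike.ofReal_injective (K := 𝕜)
        push_cast
        rw [← hK.1.det_eq_prod_eigenvalues, det_mul, det_conjTranspose, RCLike.star_def,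
          RCLike.mul_conj]
    _ ≤ ((∑ i, hK.1.eigenvalues i) / Fintype.card n) ^ Fintype.card n :=
        Real.prod_le_sum_div_card_pow _ hK.eigenvalues_nonneg
    _ = (‖A‖ ^ 2 / Fintype.card n) ^ Fintype.card n := by
        congr
        apply RCLike.ofReal_injective (K := 𝕜)
        rw [RCLike.ofReal_sum, ← hK.1.trace_eq_sum_eigenvalues, trace_mul_conjTranspose_self]

theorem norm_det_le (A : Matrix n n 𝕜) :
    ‖A.det‖ ≤ (‖A‖ / √(Fintype.card n)) ^ Fintype.card n := by
  refine le_of_pow_le_pow_left₀ two_ne_zero (by positivity) ?_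
  rw [← pow_mul, mul_comm, pow_mul, div_pow, Real.sq_sqrt (Nat.cast_nonneg _)]
  exact norm_det_sq_le A

theorem frobenius_norm_one_eq_sqrt_card : ‖(1 : Matrix n n 𝕜)‖ = √(Fintype.card n) := by
  simpa using congrArg NNReal.toReal (frobenius_nnnorm_one (n := n) (α := 𝕜))

theorem norm_det_one_add_le (C : Matrix n n 𝕜) :
    ‖(1 + C).det‖ ≤ (1 + ‖C‖) ^ Fintype.card n := by
  rcases isEmpty_or_nonempty n with hn | hn
  · simp
  have hs : 1 ≤ √(Fintype.card n : ℝ) :=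
    Real.one_le_sqrt.mpr (by exact_mod_cast Fintype.card_pos)
  have hbase : ‖1 + C‖ / √(Fintype.card n) ≤ 1 + ‖C‖ := by
    rw [div_le_iff₀ (by positivity)]
    calc ‖1 + C‖ ≤ √(Fintype.card n) + ‖C‖ :=
          (norm_add_le _ _).trans_eq (by rw [frobenius_norm_one_eq_sqrt_card])
      _ ≤ (1 + ‖C‖) * √(Fintype.card n) := by nlinarith [norm_nonneg C]
  exact (norm_det_le _).trans (by gcongr)

theorem frobenius_norm_le_sqrt_card {N : Matrix n n 𝕜} (hN : (1 - N * Nᴴ).PosSemidef) :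
    ‖N‖ ≤ √(Fintype.card n) := by
  have htrace := hN.trace_nonneg
  rw [trace_sub, trace_one, trace_mul_conjTranspose_self, ← RCLike.ofReal_natCast,
    ← RCLike.ofReal_sub, RCLike.ofReal_nonneg, sub_nonneg] at htrace
  exact Real.le_sqrt_of_sq_le htrace

theorem PosSemidef.frobenius_norm_inv_one_add_le {P : Matrix n n 𝕜} (hP : P.PosSemidef) :
    ‖(1 + P)⁻¹‖ ≤ √(Fintype.card n) := by
  apply frobenius_norm_le_sqrt_card
  set N := (1 + P)⁻¹
  have hM : (1 + P).PosDef := PosDef.one.add_posSemidef hP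
  have hunit : IsUnit (1 + P).det := hM.det_pos.ne'.isUnit
  have hN : Nᴴ = N := hM.posSemidef.inv.isHermitian
  -- `Pᴴ * P + (P + P) = (1 + P) ^ 2 - 1`, conjugated by `N = (1 + P)⁻¹`
  have key : 1 - N * Nᴴ = Nᴴ * (Pᴴ * P + (P + P)) * N := by
    rw [hN, hP.isHermitian.eq]
    calc 1 - N * N = N * (1 + P) * ((1 + P) * N) - N * N := by
          rw [nonsing_inv_mul _ hunit, mul_nonsing_inv _ hunit, one_mul]
      _ = N * (P * P + (P + P)) * N := by noncomm_ring
  rw [key]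
  exact ((posSemidef_conjTranspose_mul_self P).add (hP.add hP)).conjTranspose_mul_mul_same N

end Matrix

theorem RCLike.re_mul_le_of_nonneg {𝕜 : Type*} [RCLike 𝕜] {z w : 𝕜} {b : ℝ} (hz : 0 ≤ z)
    (hw : ‖w‖ ≤ b) : re (z * w) ≤ re z * b := by
  obtain ⟨x, hx, rfl⟩ := RCLike.nonneg_iff_exists_ofReal.mp hz
  rw [RCLike.re_ofReal_mul, RCLike.ofReal_re]
  exact mul_le_mul_of_nonneg_left ((RCLike.re_le_norm w).trans hw) hx

theorem det_one_add_le_general {t r : ℕ}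
    (Q Q' : Matrix (Fin t) (Fin t) ℂ) (hQ : Q.PosSemidef)
    (H : Matrix (Fin t) (Fin r) ℂ) :
    (((1 : Matrix (Fin r) (Fin r) ℂ) + Hᴴ * Q' * H).det).re
      ≤ (((1 : Matrix (Fin r) (Fin r) ℂ) + Hᴴ * Q * H).det).re *
          (1 + Real.sqrt r * frob (Q' - Q) * frob H ^ 2) ^ r := by
  set P := Hᴴ * Q * H
  have hP : P.PosSemidef := hQ.conjTranspose_mul_mul_same H
  have hunit : IsUnit (1 + P).det := (PosDef.one.add_posSemidef hP).det_pos.ne'.isUnit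
  set C := (1 + P)⁻¹ * (Hᴴ * (Q' - Q) * H)
  have hfactor : 1 + Hᴴ * Q' * H = (1 + P) * (1 + C) := by
    rw [mul_add, mul_one, ← mul_assoc, mul_nonsing_inv _ hunit, one_mul, Matrix.mul_sub,
      Matrix.sub_mul]
    abel
  have hC : ‖C‖ ≤ √r * frob (Q' - Q) * frob H ^ 2 := by
    rw [frob_eq_norm, frob_eq_norm]
    calc ‖C‖ ≤ ‖(1 + P)⁻¹‖ * ‖Hᴴ * (Q' - Q) * H‖ := frobenius_norm_mul _ _
      _ ≤ √r * (‖Hᴴ‖ * ‖Q' - Q‖ * ‖H‖) := by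
          gcongr
          · simpa using hP.frobenius_norm_inv_one_add_le
          · exact (frobenius_norm_mul _ _).trans (by gcongr; exact frobenius_norm_mul _ _)
      _ = √r * ‖Q' - Q‖ * ‖H‖ ^ 2 := by rw [frobenius_norm_conjTranspose]; ring
  rw [hfactor, det_mul]
  refine RCLike.re_mul_le_of_nonneg (PosSemidef.one.add hP).det_nonneg
    ((norm_det_one_add_le C).trans ?_)
  simpa using pow_le_pow_left₀ (by positivity) (by linarith) r

/-- `det(I + HᴴQ′H) ≤ det(I + HᴴQH) · (1 + √r ‖Q′−Q‖_F ‖H‖_F²)^r` for positive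
semidefinite `Q, Q′`. -/
theorem det_one_add_le {t r : ℕ}
    (Q Q' : Matrix (Fin t) (Fin t) ℂ) (hQ : Q.PosSemidef) (hQ' : Q'.PosSemidef)
    (H : Matrix (Fin t) (Fin r) ℂ) :
    (((1 : Matrix (Fin r) (Fin r) ℂ) + Hᴴ * Q' * H).det).re
      ≤ (((1 : Matrix (Fin r) (Fin r) ℂ) + Hᴴ * Q * H).det).re *
          (1 + Real.sqrt r * frob (Q' - Q) * frob H ^ 2) ^ r :=
  det_one_add_le_general Q Q' hQ H
end

section
/- Let H be a random t×r complex matrix with E[‖H‖_F²] < ∞ whose distribution is absolutely continuous with respect to Lebesgue measure on ℂ^{t×r}. Then for every R ∈ ℝ, the infimum of P[log det(I_r + Hᴴ Q H) < R] over the compact set U = {Q ⪰ 0 : tr(Q) ≤ ρ} of t×t positive semidefinite matrices is attained, i.e., the infimum is a minimum. -/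
/-!
The outage probability `Q ↦ ℙ[log det (I + Hᴴ Q H) < R]` is lower semicontinuous on the positive
semidefinite cone: for each fixed `ω` the event is open in `Q`, so a point of the event at `Q`
stays in the event at every nearby `Q'`, and continuity of `ℙ` along increasing unions turns this
pointwise statement into `ℙ(event at Q) ≤ liminf ℙ(event at Q')`. A lower semicontinuous function
attains its minimum on the compact set `{Q ⪰ 0 : tr Q ≤ ρ}`; compactness follows from the entry
bound `|Q i j|² ≤ Q i i Q j j ≤ (tr Q)²`, a `2 × 2` principal minor of `Q`.
-/

open Matrix
open scoped ComplexOrder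

open MeasureTheory ProbabilityTheory

namespace MeasureTheory

variable {X Ω : Type*} [MeasurableSpace Ω] (μ : Measure Ω)

theorem eventually_lt_measure_of_forall_eventually_mem {l : Filter X} [l.IsCountablyGenerated]
    {s : X → Set Ω} {t : Set Ω} (h : ∀ ω ∈ t, ∀ᶠ x in l, ω ∈ s x) {y : ENNReal} (hy : y < μ t) :
    ∀ᶠ x in l, y < μ (s x) := by
  obtain ⟨V, hV⟩ := l.exists_antitone_basis
  set B : ℕ → Set Ω := fun n => {ω | ∀ x ∈ V n, ω ∈ s x}
  have hB_mono : Monotone B := fun m n hmn ω hω x hx => hω x (hV.antitone hmn hx)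
  have ht : t ⊆ ⋃ n, B n := fun ω hω => by
    obtain ⟨n, -, hn⟩ := hV.1.eventually_iff.1 (h ω hω)
    exact Set.mem_iUnion.2 ⟨n, fun x hx => hn hx⟩
  obtain ⟨n, hn⟩ : ∃ n, y < μ (B n) := by
    rw [← lt_iSup_iff, ← hB_mono.measure_iUnion]
    exact hy.trans_le (measure_mono ht)
  filter_upwards [hV.1.mem_of_mem trivial] with x hx
  exact hn.trans_le (measure_mono fun ω hω => hω x hx)

theorem lowerSemicontinuousOn_measure_setOf_lt [TopologicalSpace X] [FirstCountableTopology X]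
    {β : Type*} [TopologicalSpace β] [LinearOrder β] [ClosedIciTopology β]
    {f : X → Ω → β} {K : Set X} (hf : ∀ ω, ContinuousOn (f · ω) K) (b : β) :
    LowerSemicontinuousOn (fun x => μ {ω | f x ω < b}) K := fun x hx _ hy =>
  eventually_lt_measure_of_forall_eventually_mem μ
    (fun ω hω => ((hf ω) x hx).eventually_lt_const hω) hy

end MeasureTheory

namespace Matrix

instance instFirstCountableTopology {m n R : Type*} [Countable m] [Countable n]
    [TopologicalSpace R] [FirstCountableTopology R] : FirstCountableTopology (Matrix m n R) :=
  inferInstanceAs (FirstCountableTopology (m → n → R))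

variable {n 𝕜 : Type*} [RCLike 𝕜]

theorem PosSemidef.norm_apply_sq_le {Q : Matrix n n 𝕜} (hQ : Q.PosSemidef) (i j : n) :
    (‖Q i j‖ ^ 2 : 𝕜) ≤ Q i i * Q j j := by
  have hdet := (hQ.submatrix ![i, j]).det_nonneg
  rw [det_fin_two] at hdet
  simp only [submatrix_apply, cons_val_zero, cons_val_one] at hdet
  rw [← hQ.1.apply j i, RCLike.star_def, RCLike.mul_conj] at hdet
  simpa [sub_nonneg] using hdet

theorem PosSemidef.norm_apply_le_re_trace [Fintype n] {Q : Matrix n n 𝕜} (hQ : Q.PosSemidef)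
    (i j : n) :
    ‖Q i j‖ ≤ RCLike.re Q.trace := by
  have hre : ∀ k, (RCLike.re (Q k k) : 𝕜) = Q k k := fun k =>
    (RCLike.nonneg_iff_exists_ofReal.1 (hQ.diag_nonneg (i := k))).elim fun x ⟨_, hx⟩ => by
      rw [← hx]; simp
  have hdiag_le : ∀ k, RCLike.re (Q k k) ≤ RCLike.re Q.trace := fun k => by
    rw [trace, map_sum]
    exact Finset.single_le_sum (f := fun l => RCLike.re (Q l l))
      (fun l _ => (RCLike.nonneg_iff.1 (hQ.diag_nonneg (i := l))).1) (Finset.mem_univ k)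
  have hsq : ‖Q i j‖ ^ 2 ≤ RCLike.re (Q i i) * RCLike.re (Q j j) := by
    have := hQ.norm_apply_sq_le i j
    rw [← hre i, ← hre j] at this
    exact_mod_cast this
  have hi := (RCLike.nonneg_iff.1 (hQ.diag_nonneg (i := i))).1
  have hj := (RCLike.nonneg_iff.1 (hQ.diag_nonneg (i := j))).1
  nlinarith [hdiag_le i, hdiag_le j, norm_nonneg (Q i j)]

theorem isClosed_setOf_posSemidef [Fintype n] : IsClosed {Q : Matrix n n 𝕜 | Q.PosSemidef} := by
  have : {Q : Matrix n n 𝕜 | Q.PosSemidef} =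
      {Q | Q.IsHermitian} ∩ ⋂ x : n → 𝕜, {Q | 0 ≤ star x ⬝ᵥ Q *ᵥ x} := by
    ext Q
    exact ⟨fun h => ⟨h.1, Set.mem_iInter.2 h.dotProduct_mulVec_nonneg⟩,
      fun h => PosSemidef.of_dotProduct_mulVec_nonneg h.1 (Set.mem_iInter.1 h.2)⟩
  rw [this]
  refine (isClosed_eq continuous_id.matrix_conjTranspose continuous_id).inter
    (isClosed_iInter fun x => isClosed_le continuous_const ?_)
  exact continuous_const.dotProduct (continuous_id.matrix_mulVec continuous_const)

theorem isCompact_setOf_posSemidef_re_trace_le [Fintype n] (ρ : ℝ) :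
    IsCompact {Q : Matrix n n 𝕜 | Q.PosSemidef ∧ RCLike.re Q.trace ≤ ρ} := by
  refine (isCompact_univ_pi fun _ => isCompact_univ_pi fun _ =>
    isCompact_closedBall (0 : 𝕜) ρ).of_isClosed_subset ?_ fun Q hQ i _ j _ => ?_
  · exact isClosed_setOf_posSemidef.inter
      (isClosed_le (RCLike.continuous_re.comp continuous_id.matrix_trace) continuous_const)
  · simpa using (hQ.1.norm_apply_le_re_trace i j).trans hQ.2

theorem PosSemidef.posDef_one_add_conjTranspose_mul_mul [Fintype n] {m : Type*} [Fintype m]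
    [DecidableEq m] {Q : Matrix n n 𝕜} (hQ : Q.PosSemidef) (A : Matrix n m 𝕜) :
    (1 + Aᴴ * Q * A).PosDef :=
  PosDef.one.add_posSemidef (hQ.conjTranspose_mul_mul_same A)

theorem continuousOn_log_re_det_one_add_conjTranspose_mul_mul [Fintype n] {m : Type*} [Fintype m]
    [DecidableEq m] (A : Matrix n m 𝕜) :
    ContinuousOn (fun Q : Matrix n n 𝕜 => Real.log (RCLike.re (1 + Aᴴ * Q * A).det))
      {Q | Q.PosSemidef} :=
  (by fun_prop : Continuous fun Q : Matrix n n 𝕜 => RCLike.re (1 + Aᴴ * Q * A).det).continuousOn.log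
    fun _ (hQ : PosSemidef _) =>
      (RCLike.pos_iff.1 (hQ.posDef_one_add_conjTranspose_mul_mul A).det_pos).1.ne'

end Matrix

theorem exists_min_outage_general {t r : ℕ} {Ω : Type} [MeasureSpace Ω]
    (H : Ω → (Fin t → Fin r → ℂ))
    (ρ : ℝ) (hρ : 0 < ρ) (R : ℝ) :
    ∃ Q : Matrix (Fin t) (Fin t) ℂ, Q.PosSemidef ∧ Q.trace.re ≤ ρ ∧
      ∀ Q' : Matrix (Fin t) (Fin t) ℂ, Q'.PosSemidef → Q'.trace.re ≤ ρ →
        (ℙ : Measure Ω) {ω |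
            Real.log (((1 : Matrix (Fin r) (Fin r) ℂ)
              + (Matrix.of (H ω))ᴴ * Q * Matrix.of (H ω)).det).re < R}
          ≤ (ℙ : Measure Ω) {ω |
            Real.log (((1 : Matrix (Fin r) (Fin r) ℂ)
              + (Matrix.of (H ω))ᴴ * Q' * Matrix.of (H ω)).det).re < R} := by
  set U := {Q : Matrix (Fin t) (Fin t) ℂ | Q.PosSemidef ∧ Q.trace.re ≤ ρ}
  have hU_nonempty : U.Nonempty := ⟨0, PosSemidef.zero, by simpa using hρ.le⟩
  have hU_compact : IsCompact U := isCompact_setOf_posSemidef_re_trace_le ρ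
  have houtage_lsc : LowerSemicontinuousOn (fun Q : Matrix (Fin t) (Fin t) ℂ =>
      ℙ {ω | Real.log (1 + (of (H ω))ᴴ * Q * of (H ω)).det.re < R}) U :=
    lowerSemicontinuousOn_measure_setOf_lt ℙ (fun ω =>
      (continuousOn_log_re_det_one_add_conjTranspose_mul_mul (of (H ω))).mono fun _ hQ => hQ.1) R
  obtain ⟨Q, hQ, hmin⟩ := houtage_lsc.exists_isMinOn hU_nonempty hU_compact
  exact ⟨Q, hQ.1, hQ.2, fun Q' hQ' htr => hmin ⟨hQ', htr⟩⟩

/-- Existence of an optimal input covariance matrix: if `H` is a random `t×r`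
complex matrix with `E[‖H‖_F²] < ∞` whose law is absolutely continuous with
respect to the Lebesgue measure, then for every `R` the infimum of
`P[log det(I_r + Hᴴ Q H) < R]` over `{Q ⪰ 0 : tr(Q) ≤ ρ}` is attained. -/
theorem exists_min_outage {t r : ℕ} {Ω : Type} [MeasureSpace Ω]
    [IsProbabilityMeasure (ℙ : Measure Ω)]
    (H : Ω → (Fin t → Fin r → ℂ)) (hmeas : Measurable H)
    (hmom : Integrable (fun ω => frob (Matrix.of (H ω)) ^ 2) ℙ)
    (habs : Measure.map H ℙ ≪ (volume : Measure (Fin t → Fin r → ℂ)))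
    (ρ : ℝ) (hρ : 0 < ρ) (R : ℝ) :
    ∃ Q : Matrix (Fin t) (Fin t) ℂ, Q.PosSemidef ∧ Q.trace.re ≤ ρ ∧
      ∀ Q' : Matrix (Fin t) (Fin t) ℂ, Q'.PosSemidef → Q'.trace.re ≤ ρ →
        (ℙ : Measure Ω) {ω |
            Real.log (((1 : Matrix (Fin r) (Fin r) ℂ)
              + (Matrix.of (H ω))ᴴ * Q * Matrix.of (H ω)).det).re < R}
          ≤ (ℙ : Measure Ω) {ω |
            Real.log (((1 : Matrix (Fin r) (Fin r) ℂ)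
              + (Matrix.of (H ω))ᴴ * Q' * Matrix.of (H ω)).det).re < R} :=
  exists_min_outage_general H ρ hρ R
end

section
/- Let B be an r×r Hermitian positive definite matrix with ordered eigenvalues b1 ≥ ⋯ ≥ b_r, let D = diag(d1,…,d_r) with d1 ≥ ⋯ ≥ d_r ≥ 0, and let Q be an r×r unitary matrix. Then tr(B^{−1} Q D Qᴴ) ≥ Σ_{i=1}^r d_i / b_i. -/
open Matrix
open scoped ComplexOrder

/-!
Diagonalise `B = U Λ Uᴴ` and put `M = Uᴴ Q`, again unitary. Then
`tr(B⁻¹ Q D Qᴴ) = Σᵢⱼ λᵢ⁻¹ |Mᵢⱼ|² dⱼ`, and the matrix `(|Mᵢⱼ|²)` is doubly stochastic.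
The bilinear form `(f, g) ↦ f ⬝ᵥ P g` is linear in `P`, so over the Birkhoff polytope it is
minimised at a permutation matrix, where the rearrangement inequality shows that pairing the
increasing sequence `bᵢ⁻¹` with the decreasing sequence `dᵢ` is optimal.
-/

namespace Matrix

variable {n : Type*} [Fintype n] [DecidableEq n]

theorem _root_.Antivary.dotProduct_le_dotProduct_mulVec_of_mem_doublyStochastic {R : Type*}
    [Field R] [LinearOrder R] [IsStrictOrderedRing R] {f g : n → R} (hfg : Antivary f g)
    {P : Matrix n n R} (hP : P ∈ doublyStochastic R n) :
    f ⬝ᵥ g ≤ f ⬝ᵥ (P *ᵥ g) := by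
  let form : Matrix n n R →ₗ[R] R :=
    { toFun := fun P => f ⬝ᵥ (P *ᵥ g)
      map_add' := fun P P' => by simp only [add_mulVec, dotProduct_add]
      map_smul' := fun c P => by simp only [smul_mulVec, dotProduct_smul, RingHom.id_apply] }
  rw [← SetLike.mem_coe, doublyStochastic_eq_convexHull_permMatrix] at hP
  obtain ⟨_, ⟨σ, rfl⟩, hσ⟩ :=
    (form.concaveOn convex_univ).exists_le_of_mem_convexHull (Set.subset_univ _) hP
  calc f ⬝ᵥ g ≤ f ⬝ᵥ (g ∘ σ) := hfg.sum_mul_le_sum_mul_comp_perm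
    _ = form (σ.permMatrix R) := by simp [form, permMatrix_mulVec]
    _ ≤ f ⬝ᵥ (P *ᵥ g) := hσ

variable {𝕜 : Type*} [RCLike 𝕜]

def entrywiseNormSq {m : Type*} (M : Matrix m n 𝕜) : Matrix m n ℝ :=
  of fun i j => ‖M i j‖ ^ 2

theorem entrywiseNormSq_mem_doublyStochastic {U : Matrix n n 𝕜} (hU : U ∈ unitaryGroup n 𝕜) :
    entrywiseNormSq U ∈ doublyStochastic ℝ n := by
  refine mem_doublyStochastic_iff_sum.2 ⟨fun _ _ => sq_nonneg _, fun i => ?_, fun j => ?_⟩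
  · have h := congrFun (congrFun (mem_unitaryGroup_iff.1 hU) i) i
    simp only [mul_apply, star_apply, RCLike.star_def, RCLike.mul_conj, one_apply_eq] at h
    exact_mod_cast h
  · have h := congrFun (congrFun (mem_unitaryGroup_iff'.1 hU) j) j
    simp only [mul_apply, star_apply, RCLike.star_def, mul_comm (starRingEnd 𝕜 _),
      RCLike.mul_conj, one_apply_eq] at h
    exact_mod_cast h

theorem trace_diagonal_mul_mul_diagonal_mul_conjTranspose (a c : n → ℝ) (M : Matrix n n 𝕜) :
    trace (diagonal (fun i => (a i : 𝕜)) * (M * diagonal (fun j => (c j : 𝕜)) * Mᴴ)) =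
      ((a ⬝ᵥ (entrywiseNormSq M *ᵥ c) : ℝ) : 𝕜) := by
  simp only [trace, diag_apply, diagonal_mul]
  simp only [mul_apply, diagonal_apply, mul_ite, mul_zero, Finset.sum_ite_eq',
    Finset.mem_univ, if_true, conjTranspose_apply, RCLike.star_def, dotProduct, mulVec,
    entrywiseNormSq, of_apply, Finset.mul_sum]
  push_cast
  refine Finset.sum_congr rfl fun i _ => Finset.sum_congr rfl fun j _ => ?_
  rw [← RCLike.mul_conj]
  ring

theorem IsHermitian.inv_eq_conjStarAlgAut {A : Matrix n n 𝕜} (hA : A.IsHermitian)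
    (h : ∀ i, hA.eigenvalues i ≠ 0) :
    A⁻¹ = Unitary.conjStarAlgAut 𝕜 _ hA.eigenvectorUnitary
      (diagonal (RCLike.ofReal ∘ hA.eigenvalues⁻¹)) := by
  refine inv_eq_left_inv ?_
  calc _ * A = Unitary.conjStarAlgAut 𝕜 _ hA.eigenvectorUnitary
          (diagonal (RCLike.ofReal ∘ hA.eigenvalues⁻¹) *
            diagonal (RCLike.ofReal ∘ hA.eigenvalues)) := by
        rw [map_mul, ← hA.spectral_theorem]
    _ = 1 := by
        rw [diagonal_mul_diagonal, ← map_one (Unitary.conjStarAlgAut 𝕜 (Matrix n n 𝕜) _),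
          ← diagonal_one]
        congr 2
        ext i
        simp [h i]

end Matrix

theorem trace_inv_mul_unitary_diag_ge_general {r : ℕ}
    (B : Matrix (Fin r) (Fin r) ℂ) (hB : B.PosDef)
    (b : Fin r → ℝ) (hb_mono : ∀ i j : Fin r, i ≤ j → b j ≤ b i)
    (hb_eig : ∃ σ : Equiv.Perm (Fin r), ∀ i, b i = hB.1.eigenvalues (σ i))
    (d : Fin r → ℝ) (hd_mono : ∀ i j : Fin r, i ≤ j → d j ≤ d i)
    (Q : Matrix (Fin r) (Fin r) ℂ) (hQ : Qᴴ * Q = 1) :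
    ∑ i, d i / b i
      ≤ ((B⁻¹ * (Q * Matrix.diagonal (fun i => (d i : ℂ)) * Qᴴ)).trace).re := by
  obtain ⟨σ, hσ⟩ := hb_eig
  set U := hB.1.eigenvectorUnitary
  set M := star (U : Matrix (Fin r) (Fin r) ℂ) * Q
  have hM : M ∈ unitaryGroup (Fin r) ℂ :=
    Submonoid.mul_mem _ (star U).2 (mem_unitaryGroup_iff'.2 hQ)
  have htrace : (B⁻¹ * (Q * diagonal (fun i => (d i : ℂ)) * Qᴴ)).trace =
      ((hB.1.eigenvalues⁻¹ ⬝ᵥ (entrywiseNormSq M *ᵥ d) : ℝ) : ℂ) := by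
    refine Eq.trans ?_ (trace_diagonal_mul_mul_diagonal_mul_conjTranspose _ _ M)
    rw [hB.1.inv_eq_conjStarAlgAut fun i => (hB.eigenvalues_pos i).ne',
      Unitary.conjStarAlgAut_apply, Matrix.mul_assoc, Matrix.mul_assoc, trace_mul_comm]
    simp only [M, conjTranspose_mul, star_eq_conjTranspose, conjTranspose_conjTranspose,
      Matrix.mul_assoc, Function.comp_def]
    rfl -- `Complex.ofReal` against `RCLike.ofReal`
  have hb_pos : ∀ i, 0 < b i := fun i => hσ i ▸ hB.eigenvalues_pos _
  have hanti : Antivary b⁻¹ d :=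
    Monotone.antivary (fun i j hij => inv_anti₀ (hb_pos j) (hb_mono i j hij)) hd_mono
  have hb : b⁻¹ = hB.1.eigenvalues⁻¹ ∘ σ := funext fun i => by simp [hσ i]
  rw [htrace, Complex.ofReal_re]
  calc ∑ i, d i / b i = b⁻¹ ⬝ᵥ d := by simp [dotProduct, div_eq_inv_mul]
    _ ≤ b⁻¹ ⬝ᵥ ((σ.permMatrix ℝ * entrywiseNormSq M) *ᵥ d) :=
      hanti.dotProduct_le_dotProduct_mulVec_of_mem_doublyStochastic
        (Submonoid.mul_mem _ permMatrix_mem_doublyStochastic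
          (entrywiseNormSq_mem_doublyStochastic hM))
    _ = hB.1.eigenvalues⁻¹ ⬝ᵥ (entrywiseNormSq M *ᵥ d) := by
      rw [← mulVec_mulVec, permMatrix_mulVec, hb, comp_equiv_dotProduct_comp_equiv]

/-- Trace inequality: if `B ≻ 0` has ordered eigenvalues `b₁ ≥ ⋯ ≥ b_r`,
`D = diag(d₁,…,d_r)` with `d₁ ≥ ⋯ ≥ d_r ≥ 0`, and `Q` is unitary, then
`tr(B⁻¹ Q D Qᴴ) ≥ Σᵢ dᵢ/bᵢ`. -/
theorem trace_inv_mul_unitary_diag_ge {r : ℕ}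
    (B : Matrix (Fin r) (Fin r) ℂ) (hB : B.PosDef)
    (b : Fin r → ℝ) (hb_mono : ∀ i j : Fin r, i ≤ j → b j ≤ b i)
    (hb_eig : ∃ σ : Equiv.Perm (Fin r), ∀ i, b i = hB.1.eigenvalues (σ i))
    (d : Fin r → ℝ) (hd_mono : ∀ i j : Fin r, i ≤ j → d j ≤ d i)
    (hd_nonneg : ∀ i, 0 ≤ d i)
    (Q : Matrix (Fin r) (Fin r) ℂ) (hQ : Qᴴ * Q = 1) :
    ∑ i, d i / b i
      ≤ ((B⁻¹ * (Q * Matrix.diagonal (fun i => (d i : ℂ)) * Qᴴ)).trace).re :=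
  trace_inv_mul_unitary_diag_ge_general B hB b hb_mono hb_eig d hd_mono Q hQ
end

section
/- Let m ≥ 1 and let λ1,…,λ_m ≥ 0 and v1,…,v_m ≥ 0 be such that not all products λ_j v_j are zero. Let Z1,…,Z_m be i.i.d. circularly-symmetric standard complex Gaussian random variables, set σ² = Σ_j (1 − 1/(1+λ_j v_j)²) > 0, and define T = (1/σ) Σ_{j=1}^m (1 − |√(λ_j v_j) Z_j − 1|²/(1 + λ_j v_j)). Then T has zero mean, unit variance, and E[|T|⁴] ≤ 9. -/
open MeasureTheory ProbabilityTheory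

noncomputable section

/-- The standard circularly-symmetric complex Gaussian distribution `CN(0,1)`:
the law of `X + iY` where `X, Y` are independent real Gaussians with mean `0`
and variance `1/2`. -/
def stdComplexGaussian : Measure ℂ :=
  Measure.map (fun p : ℝ × ℝ => (p.1 : ℂ) + (p.2 : ℂ) * Complex.I)
    ((gaussianReal 0 (1/2)).prod (gaussianReal 0 (1/2)))

end

/-!
Write `Z = X + iY` with `X, Y` independent `N(0, 1/2)`. Then
`(1 + a) (1 - |√a Z - 1|² / (1 + a)) = (a (1/2 - X²) + 2√a X) + a (1/2 - Y²)`
is a sum of two independent centred quadratics in Gaussians, whose moments follow from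
`E X^(n+2) = (n+1) v E X^n` (integration by parts against the density of `N(0, v)`). With
`E (U + V)⁴ = E U⁴ + 6 E U² E V² + E V⁴` for independent centred `U, V`, each summand `Y` of `T`
is centred with `E Y² = 1 - (1+a)⁻²` and `E Y⁴ = (9a⁴ + 36a³ + 12a²)/(1+a)⁴ ≤ 9 (E Y²)²`.
The same identity shows that a bound `E Y⁴ ≤ K (E Y²)²` with `K ≥ 3` passes to sums of
independent centred variables, which gives the fourth moment of `T` after normalising by `σ`.
-/

open Real Finset
open scoped NNReal ENNReal Nat

section MemLp

variable {α : Type*} {mα : MeasurableSpace α} {μ : Measure α}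

lemma MeasureTheory.MemLp.integrable_pow_of_le [IsFiniteMeasure μ] {f : α → ℝ} {n k : ℕ}
    (hf : MemLp f n μ) (hk : k ≤ n) : Integrable (fun x ↦ f x ^ k) μ := by
  have h := (hf.mono_exponent (p := k) (by exact_mod_cast hk)).integrable_norm_pow'
  exact (integrable_norm_iff (hf.aestronglyMeasurable.pow k)).mp
    (by simpa only [Pi.pow_apply, norm_pow] using h)

lemma memLp_four_iff_integrable_pow_four {f : α → ℝ} (hf : AEStronglyMeasurable f μ) :
    MemLp f 4 μ ↔ Integrable (fun x ↦ f x ^ 4) μ := by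
  rw [← integrable_norm_rpow_iff hf (by norm_num) (by norm_num)]
  refine integrable_congr (ae_of_all _ fun x ↦ ?_)
  simp only [ENNReal.toReal_ofNat, Real.norm_eq_abs]
  rw [show (4 : ℝ) = (4 : ℕ) by norm_num, Real.rpow_natCast, pow_abs,
    abs_of_nonneg (by positivity)]

end MemLp

lemma integrable_pow_gaussianReal (μ : ℝ) (v : ℝ≥0) (n : ℕ) :
    Integrable (fun x ↦ x ^ n) (gaussianReal μ v) :=
  MemLp.integrable_pow_of_le (f := id)
    (by simpa only [ENNReal.coe_natCast] using memLp_id_gaussianReal (μ := μ) (v := v) n) le_rfl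

lemma hasDerivAt_gaussianPDFReal_zero (v : ℝ≥0) (x : ℝ) :
    HasDerivAt (gaussianPDFReal 0 v) (-(x / v) * gaussianPDFReal 0 v x) x := by
  have h := ((hasDerivAt_pow 2 x).fun_neg.div_const (2 * (v : ℝ))).exp.const_mul
    (√(2 * π * v))⁻¹
  simp only [gaussianPDFReal_def, sub_zero]
  refine h.congr_deriv ?_
  simp only [Nat.cast_ofNat, Nat.reduceSub, pow_one]
  ring

lemma integrable_pow_mul_gaussianPDFReal {v : ℝ≥0} (hv : v ≠ 0) (n : ℕ) :
    Integrable (fun x ↦ x ^ n * gaussianPDFReal 0 v x) := by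
  have h := integrable_pow_gaussianReal 0 v n
  rw [gaussianReal_of_var_ne_zero 0 hv, integrable_withDensity_iff_integrable_smul'
    (measurable_gaussianPDF 0 v) (ae_of_all _ fun _ ↦ gaussianPDF_lt_top)] at h
  refine h.congr (ae_of_all _ fun x ↦ ?_)
  simp [gaussianPDF, ENNReal.toReal_ofReal (gaussianPDFReal_nonneg 0 v x), mul_comm]

lemma integral_pow_add_two_gaussianReal (v : ℝ≥0) (n : ℕ) :
    ∫ x, x ^ (n + 2) ∂gaussianReal 0 v = (n + 1) * v * ∫ x, x ^ n ∂gaussianReal 0 v := by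
  rcases eq_or_ne v 0 with rfl | hv
  · simp
  simp only [integral_gaussianReal_eq_integral_smul hv, smul_eq_mul]
  have hparts := integral_mul_deriv_eq_deriv_mul_of_integrable
    (u := fun x ↦ x ^ (n + 1)) (u' := fun x ↦ (n + 1) * x ^ n)
    (v := gaussianPDFReal 0 v) (v' := fun x ↦ -(x / v) * gaussianPDFReal 0 v x)
    (fun x _ ↦ by simpa using hasDerivAt_pow (n + 1) x)
    (fun x _ ↦ hasDerivAt_gaussianPDFReal_zero v x)
    (((integrable_pow_mul_gaussianPDFReal hv (n + 2)).const_mul (-(v : ℝ)⁻¹)).congr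
      (ae_of_all _ fun x ↦ by simp only [Pi.mul_apply]; ring))
    (((integrable_pow_mul_gaussianPDFReal hv n).const_mul (n + 1)).congr
      (ae_of_all _ fun x ↦ by simp only [Pi.mul_apply]; ring))
    (integrable_pow_mul_gaussianPDFReal hv (n + 1))
  have hv' : (v : ℝ) ≠ 0 := by exact_mod_cast hv
  simp only [show ∀ x : ℝ, x ^ (n + 1) * (-(x / v) * gaussianPDFReal 0 v x)
      = -(v : ℝ)⁻¹ * (gaussianPDFReal 0 v x * x ^ (n + 2)) from fun x ↦ by ring,
    show ∀ x : ℝ, (n + 1) * x ^ n * gaussianPDFReal 0 v x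
      = (n + 1) * (gaussianPDFReal 0 v x * x ^ n) from fun x ↦ by ring,
    integral_const_mul] at hparts
  field_simp at hparts
  linear_combination -hparts

-- At `n = 0` the truncated `(n - 1)‼ = 0‼ = 1` gives the right value.
lemma integral_pow_gaussianReal_zero (v : ℝ≥0) (n : ℕ) :
    ∫ x, x ^ n ∂gaussianReal 0 v = if Even n then (v : ℝ) ^ (n / 2) * (n - 1)‼ else 0 := by
  induction n using Nat.twoStepInduction with
  | zero => simp
  | one => simp
  | more n ih _ =>
    rw [integral_pow_add_two_gaussianReal, ih]
    by_cases hn : Even n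
    · rw [if_pos hn, if_pos (by simpa [Nat.even_add] using hn), Nat.add_div_right n two_pos,
        show n + 2 - 1 = n + 1 by omega, Nat.doubleFactorial_add_one]
      push_cast
      ring
    · rw [if_neg hn, if_neg (by simpa [Nat.even_add] using hn), mul_zero]

lemma integrable_of_eq_sum_pow_gaussianReal {v : ℝ≥0} {f : ℝ → ℝ} {n : ℕ} (c : Fin n → ℝ)
    (hf : ∀ x, f x = ∑ k, c k * x ^ (k : ℕ)) : Integrable f (gaussianReal 0 v) := by
  simp_rw [funext hf]
  exact integrable_finsetSum _ fun k _ ↦ (integrable_pow_gaussianReal 0 v k).const_mul (c k)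

lemma integral_of_eq_sum_pow_gaussianReal {v : ℝ≥0} {f : ℝ → ℝ} {n : ℕ} (c : Fin n → ℝ)
    (hf : ∀ x, f x = ∑ k, c k * x ^ (k : ℕ)) :
    ∫ x, f x ∂gaussianReal 0 v =
      ∑ k, c k * if Even (k : ℕ) then (v : ℝ) ^ ((k : ℕ) / 2) * ((k : ℕ) - 1)‼ else 0 := by
  simp_rw [funext hf]
  rw [integral_finsetSum _ fun (k : Fin n) _ ↦
    (integrable_pow_gaussianReal 0 v k).const_mul (c k)]
  simp_rw [integral_const_mul, integral_pow_gaussianReal_zero]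

section Quadratic

def centeredQuadratic (v : ℝ≥0) (c d x : ℝ) : ℝ := c * (v - x ^ 2) + d * x

variable (v : ℝ≥0) (c d : ℝ)

lemma integral_centeredQuadratic : ∫ x, centeredQuadratic v c d x ∂gaussianReal 0 v = 0 := by
  rw [integral_of_eq_sum_pow_gaussianReal ![c * v, d, -c] fun x ↦ by
    simp only [centeredQuadratic, Fin.sum_univ_succ, Fin.sum_univ_zero, Matrix.cons_val_zero,
      Matrix.cons_val_succ, Fin.val_zero, Fin.val_succ]
    ring]
  norm_num [Fin.sum_univ_succ, Nat.even_iff]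

lemma integral_centeredQuadratic_sq :
    ∫ x, centeredQuadratic v c d x ^ 2 ∂gaussianReal 0 v = 2 * v ^ 2 * c ^ 2 + v * d ^ 2 := by
  rw [integral_of_eq_sum_pow_gaussianReal ![c ^ 2 * v ^ 2, 2 * c * d * v, d ^ 2 - 2 * c ^ 2 * v,
    -2 * c * d, c ^ 2] fun x ↦ by
      simp only [centeredQuadratic, Fin.sum_univ_succ, Fin.sum_univ_zero, Matrix.cons_val_zero,
        Matrix.cons_val_succ, Fin.val_zero, Fin.val_succ]
      ring]
  norm_num [Fin.sum_univ_succ, Nat.even_iff, Nat.doubleFactorial]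
  ring

lemma centeredQuadratic_pow_four_eq_sum (x : ℝ) :
    centeredQuadratic v c d x ^ 4 = ∑ k : Fin 9, ![c ^ 4 * v ^ 4, 4 * c ^ 3 * d * v ^ 3,
      6 * c ^ 2 * d ^ 2 * v ^ 2 - 4 * c ^ 4 * v ^ 3, 4 * c * d ^ 3 * v - 12 * c ^ 3 * d * v ^ 2,
      6 * c ^ 4 * v ^ 2 - 12 * c ^ 2 * d ^ 2 * v + d ^ 4, 12 * c ^ 3 * d * v - 4 * c * d ^ 3,
      6 * c ^ 2 * d ^ 2 - 4 * c ^ 4 * v, -4 * c ^ 3 * d, c ^ 4] k * x ^ (k : ℕ) := by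
  simp only [centeredQuadratic, Fin.sum_univ_succ, Fin.sum_univ_zero, Matrix.cons_val_zero,
    Matrix.cons_val_succ, Fin.val_zero, Fin.val_succ]
  ring

lemma integral_centeredQuadratic_pow_four :
    ∫ x, centeredQuadratic v c d x ^ 4 ∂gaussianReal 0 v =
      60 * v ^ 4 * c ^ 4 + 60 * v ^ 3 * c ^ 2 * d ^ 2 + 3 * v ^ 2 * d ^ 4 := by
  rw [integral_of_eq_sum_pow_gaussianReal _ (centeredQuadratic_pow_four_eq_sum v c d)]
  norm_num [Fin.sum_univ_succ, Nat.even_iff, Nat.doubleFactorial]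
  ring

lemma memLp_centeredQuadratic : MemLp (centeredQuadratic v c d) 4 (gaussianReal 0 v) :=
  (memLp_four_iff_integrable_pow_four (by unfold centeredQuadratic; fun_prop)).mpr
    (integrable_of_eq_sum_pow_gaussianReal _ (centeredQuadratic_pow_four_eq_sum v c d))

end Quadratic

namespace ProbabilityTheory

variable {Ω : Type*} {mΩ : MeasurableSpace Ω} {μ : Measure Ω} [IsProbabilityMeasure μ]
  {U V : Ω → ℝ}

lemma IndepFun.integral_add_pow (h : U ⟂ᵢ[μ] V) {n : ℕ} (hU : MemLp U n μ)
    (hV : MemLp V n μ) :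
    ∫ ω, (U ω + V ω) ^ n ∂μ =
      ∑ k ∈ range (n + 1), (∫ ω, U ω ^ k ∂μ) * (∫ ω, V ω ^ (n - k) ∂μ) * n.choose k := by
  have hpow (k : ℕ) : (fun ω ↦ U ω ^ k) ⟂ᵢ[μ] (fun ω ↦ V ω ^ (n - k)) :=
    h.comp (measurable_id.pow_const k) (measurable_id.pow_const (n - k))
  simp_rw [add_pow]
  have hint (k : ℕ) (hk : k ∈ range (n + 1)) :
      Integrable (fun ω ↦ U ω ^ k * V ω ^ (n - k) * n.choose k) μ :=
    ((hpow k).integrable_mul (hU.integrable_pow_of_le (by simp at hk; omega))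
      (hV.integrable_pow_of_le (Nat.sub_le n k))).mul_const _
  rw [integral_finsetSum _ hint]
  refine sum_congr rfl fun k _ ↦ ?_
  rw [integral_mul_const,
    (hpow k).integral_fun_mul_eq_mul_integral (hU.1.pow k) (hV.1.pow (n - k))]

lemma IndepFun.integral_add_sq (h : U ⟂ᵢ[μ] V) (hU : MemLp U 2 μ) (hV : MemLp V 2 μ)
    (hU0 : ∫ ω, U ω ∂μ = 0) :
    ∫ ω, (U ω + V ω) ^ 2 ∂μ = ∫ ω, U ω ^ 2 ∂μ + ∫ ω, V ω ^ 2 ∂μ := by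
  rw [h.integral_add_pow (n := 2) (by exact_mod_cast hU) (by exact_mod_cast hV)]
  simp [sum_range_succ, hU0, add_comm]

lemma IndepFun.integral_add_pow_four (h : U ⟂ᵢ[μ] V) (hU : MemLp U 4 μ) (hV : MemLp V 4 μ)
    (hU0 : ∫ ω, U ω ∂μ = 0) (hV0 : ∫ ω, V ω ∂μ = 0) :
    ∫ ω, (U ω + V ω) ^ 4 ∂μ =
      ∫ ω, U ω ^ 4 ∂μ + 6 * (∫ ω, U ω ^ 2 ∂μ) * (∫ ω, V ω ^ 2 ∂μ) + ∫ ω, V ω ^ 4 ∂μ := by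
  rw [h.integral_add_pow (n := 4) (by exact_mod_cast hU) (by exact_mod_cast hV)]
  simp only [sum_range_succ, sum_range_zero]
  norm_num [hU0, hV0, Nat.choose]
  ring

theorem iIndepFun.integral_sum_sq_and_integral_sum_pow_four_le {ι : Type*} {Y : ι → Ω → ℝ}
    (hind : iIndepFun Y μ) (hY : ∀ i, MemLp (Y i) 4 μ) (hY0 : ∀ i, ∫ ω, Y i ω ∂μ = 0)
    {K : ℝ} (hK : 3 ≤ K) (hY4 : ∀ i, ∫ ω, Y i ω ^ 4 ∂μ ≤ K * (∫ ω, Y i ω ^ 2 ∂μ) ^ 2)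
    (s : Finset ι) :
    ∫ ω, (∑ i ∈ s, Y i ω) ^ 2 ∂μ = ∑ i ∈ s, ∫ ω, Y i ω ^ 2 ∂μ ∧
      ∫ ω, (∑ i ∈ s, Y i ω) ^ 4 ∂μ ≤ K * (∑ i ∈ s, ∫ ω, Y i ω ^ 2 ∂μ) ^ 2 := by
  classical
  induction s using Finset.induction_on with
  | empty => simp
  | @insert i s hi ih =>
    obtain ⟨ih2, ih4⟩ := ih
    have hindep : (fun ω ↦ ∑ j ∈ s, Y j ω) ⟂ᵢ[μ] Y i := by
      simpa only [Finset.sum_fn] using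
        hind.indepFun_finsetSum_of_notMem₀ (fun j ↦ (hY j).aestronglyMeasurable.aemeasurable) hi
    have hS : MemLp (fun ω ↦ ∑ j ∈ s, Y j ω) 4 μ := memLp_finsetSum _ fun j _ ↦ hY j
    have hS0 : ∫ ω, ∑ j ∈ s, Y j ω ∂μ = 0 := by
      rw [integral_finsetSum _ fun j _ ↦ (hY j).integrable (by norm_num)]
      simp [hY0]
    have hS2 := hindep.integral_add_sq (hS.mono_exponent (by norm_num))
      ((hY i).mono_exponent (by norm_num)) hS0
    have hS4 := hindep.integral_add_pow_four hS (hY i) hS0 (hY0 i)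
    simp only [sum_insert hi, add_comm (Y i _)]
    refine ⟨by rw [hS2, ih2, add_comm], ?_⟩
    have hw : 0 ≤ ∫ ω, Y i ω ^ 2 ∂μ := integral_nonneg fun ω ↦ sq_nonneg _
    have hW : 0 ≤ ∑ j ∈ s, ∫ ω, Y j ω ^ 2 ∂μ :=
      sum_nonneg fun j _ ↦ integral_nonneg fun ω ↦ sq_nonneg _
    rw [hS4, ih2]
    nlinarith [hY4 i, mul_nonneg hw hW]

end ProbabilityTheory

section Product

variable {α β : Type*} {mα : MeasurableSpace α} {mβ : MeasurableSpace β} {μ : Measure α}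
  {ν : Measure β} [IsProbabilityMeasure μ] [IsProbabilityMeasure ν] {f : α → ℝ} {g : β → ℝ}

lemma integral_fun_fst_add_fun_snd_sq (hf : MemLp f 2 μ) (hg : MemLp g 2 ν)
    (hf0 : ∫ x, f x ∂μ = 0) :
    ∫ z, (f z.1 + g z.2) ^ 2 ∂μ.prod ν = ∫ x, f x ^ 2 ∂μ + ∫ y, g y ^ 2 ∂ν := by
  rw [(indepFun_prod₀ hf.aemeasurable hg.aemeasurable).integral_add_sq
      (hf.comp_measurePreserving measurePreserving_fst)
      (hg.comp_measurePreserving measurePreserving_snd) (by simpa [integral_fun_fst] using hf0),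
    integral_fun_fst (fun x ↦ f x ^ 2), integral_fun_snd (fun y ↦ g y ^ 2)]
  simp

lemma integral_fun_fst_add_fun_snd_pow_four (hf : MemLp f 4 μ) (hg : MemLp g 4 ν)
    (hf0 : ∫ x, f x ∂μ = 0) (hg0 : ∫ y, g y ∂ν = 0) :
    ∫ z, (f z.1 + g z.2) ^ 4 ∂μ.prod ν =
      ∫ x, f x ^ 4 ∂μ + 6 * (∫ x, f x ^ 2 ∂μ) * (∫ y, g y ^ 2 ∂ν) + ∫ y, g y ^ 4 ∂ν := by
  rw [(indepFun_prod₀ hf.aemeasurable hg.aemeasurable).integral_add_pow_four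
      (hf.comp_measurePreserving measurePreserving_fst)
      (hg.comp_measurePreserving measurePreserving_snd) (by simpa [integral_fun_fst] using hf0)
      (by simpa [integral_fun_snd] using hg0),
    integral_fun_fst (fun x ↦ f x ^ 4), integral_fun_fst (fun x ↦ f x ^ 2),
    integral_fun_snd (fun y ↦ g y ^ 2), integral_fun_snd (fun y ↦ g y ^ 4)]
  simp

end Product

section Normalization

variable {Ω : Type*} {mΩ : MeasurableSpace Ω} {μ : Measure Ω}

lemma moments_one_div_sqrt_mul {S : Ω → ℝ} {s K : ℝ} (hs : 0 < s) (hS0 : ∫ ω, S ω ∂μ = 0)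
    (hS2 : ∫ ω, S ω ^ 2 ∂μ = s) (hS4 : ∫ ω, S ω ^ 4 ∂μ ≤ K * s ^ 2) :
    ∫ ω, 1 / √s * S ω ∂μ = 0 ∧ ∫ ω, (1 / √s * S ω) ^ 2 ∂μ = 1 ∧
      ∫ ω, |1 / √s * S ω| ^ 4 ∂μ ≤ K := by
  have hsq : √s ^ 2 = s := sq_sqrt hs.le
  simp_rw [Even.pow_abs ⟨2, rfl⟩, mul_pow, integral_const_mul, hS0, hS2]
  refine ⟨mul_zero _, by rw [div_pow, hsq, one_pow, one_div_mul_cancel hs.ne'], ?_⟩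
  calc (1 / √s) ^ 4 * ∫ ω, S ω ^ 4 ∂μ ≤ (1 / √s) ^ 4 * (K * (√s ^ 2) ^ 2) := by
        rw [hsq]; gcongr
    _ = K := by field_simp

end Normalization

section ComplexGaussian

variable {Ω : Type*} {mΩ : MeasurableSpace Ω} {μ : Measure Ω} {Z : Ω → ℂ} {a : ℝ}

/-- The summand of `T`. -/
noncomputable def normSqDeviation (a : ℝ) (z : ℂ) : ℝ := 1 - ‖(√a : ℂ) * z - 1‖ ^ 2 / (1 + a)

lemma continuous_normSqDeviation (a : ℝ) : Continuous (normSqDeviation a) := by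
  unfold normSqDeviation
  fun_prop

lemma normSqDeviation_ofReal_add_mul_I (ha : 0 ≤ a) (x y : ℝ) :
    normSqDeviation a (x + y * Complex.I) =
      (centeredQuadratic (1 / 2) a (2 * √a) x + centeredQuadratic (1 / 2) a 0 y) / (1 + a) := by
  have hz : (√a : ℂ) * (x + y * Complex.I) - 1 =
      ((√a * x - 1 : ℝ) : ℂ) + (√a * y : ℝ) * Complex.I := by
    push_cast
    ring
  rw [normSqDeviation, hz, Complex.norm_add_mul_I, sq_sqrt (by positivity), centeredQuadratic,
    centeredQuadratic, sub_eq_iff_eq_add, ← add_div, eq_div_iff (by positivity)]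
  push_cast
  linear_combination -(x ^ 2 + y ^ 2) * sq_sqrt ha

lemma identDistrib_normSqDeviation (ha : 0 ≤ a) (hZ : AEMeasurable Z μ)
    (hlaw : μ.map Z = stdComplexGaussian) :
    IdentDistrib (fun ω ↦ normSqDeviation a (Z ω))
      (fun p : ℝ × ℝ ↦
        (centeredQuadratic (1 / 2) a (2 * √a) p.1 + centeredQuadratic (1 / 2) a 0 p.2) / (1 + a))
      μ ((gaussianReal 0 (1 / 2)).prod (gaussianReal 0 (1 / 2))) := by
  have hZ' : IdentDistrib Z (fun p : ℝ × ℝ ↦ (p.1 : ℂ) + (p.2 : ℂ) * Complex.I) μ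
      ((gaussianReal 0 (1 / 2)).prod (gaussianReal 0 (1 / 2))) :=
    ⟨hZ, by fun_prop, hlaw⟩
  convert hZ'.comp (continuous_normSqDeviation a).measurable using 1
  · rfl
  funext p
  exact (normSqDeviation_ofReal_add_mul_I ha p.1 p.2).symm

lemma memLp_normSqDeviation (ha : 0 ≤ a) (hZ : AEMeasurable Z μ)
    (hlaw : μ.map Z = stdComplexGaussian) : MemLp (fun ω ↦ normSqDeviation a (Z ω)) 4 μ := by
  refine (identDistrib_normSqDeviation ha hZ hlaw).memLp_iff.mpr ?_
  simpa only [div_eq_mul_inv, Pi.add_apply, Function.comp_apply] using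
    (((memLp_centeredQuadratic _ a (2 * √a)).comp_measurePreserving measurePreserving_fst).add
      ((memLp_centeredQuadratic _ a 0).comp_measurePreserving measurePreserving_snd)).mul_const
      (1 + a)⁻¹

lemma integral_normSqDeviation (ha : 0 ≤ a) (hZ : AEMeasurable Z μ)
    (hlaw : μ.map Z = stdComplexGaussian) : ∫ ω, normSqDeviation a (Z ω) ∂μ = 0 := by
  rw [(identDistrib_normSqDeviation ha hZ hlaw).integral_eq, integral_div, integral_add,
    integral_fun_fst (centeredQuadratic _ a (2 * √a)), integral_fun_snd (centeredQuadratic _ a 0),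
    integral_centeredQuadratic, integral_centeredQuadratic]
  · simp
  · exact ((memLp_centeredQuadratic _ _ _).comp_measurePreserving
      measurePreserving_fst).integrable (by norm_num)
  · exact ((memLp_centeredQuadratic _ _ _).comp_measurePreserving
      measurePreserving_snd).integrable (by norm_num)

lemma integral_normSqDeviation_sq (ha : 0 ≤ a) (hZ : AEMeasurable Z μ)
    (hlaw : μ.map Z = stdComplexGaussian) :
    ∫ ω, normSqDeviation a (Z ω) ^ 2 ∂μ = 1 - 1 / (1 + a) ^ 2 := by
  have hd2 : (2 * √a) ^ 2 = 4 * a := by rw [mul_pow, sq_sqrt ha]; norm_num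
  simp_rw [(identDistrib_normSqDeviation ha hZ hlaw).pow.integral_eq, div_pow]
  rw [integral_div, integral_fun_fst_add_fun_snd_sq
    ((memLp_centeredQuadratic _ _ _).mono_exponent (by norm_num))
    ((memLp_centeredQuadratic _ _ _).mono_exponent (by norm_num))
    (integral_centeredQuadratic _ _ _), integral_centeredQuadratic_sq,
    integral_centeredQuadratic_sq, hd2]
  push_cast
  field_simp
  ring

lemma integral_normSqDeviation_pow_four_le (ha : 0 ≤ a) (hZ : AEMeasurable Z μ)
    (hlaw : μ.map Z = stdComplexGaussian) :
    ∫ ω, normSqDeviation a (Z ω) ^ 4 ∂μ ≤ 9 * (1 - 1 / (1 + a) ^ 2) ^ 2 := by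
  have hd2 : (2 * √a) ^ 2 = 4 * a := by rw [mul_pow, sq_sqrt ha]; norm_num
  have hd4 : (2 * √a) ^ 4 = 16 * a ^ 2 := by rw [show 4 = 2 * 2 by rfl, pow_mul, hd2]; ring
  have hrhs : 9 * (1 - 1 / (1 + a) ^ 2) ^ 2 = 9 * (a ^ 2 + 2 * a) ^ 2 / (1 + a) ^ 4 := by
    field_simp
    ring
  simp_rw [(identDistrib_normSqDeviation ha hZ hlaw).pow.integral_eq, div_pow]
  rw [integral_div, integral_fun_fst_add_fun_snd_pow_four (memLp_centeredQuadratic _ _ _)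
    (memLp_centeredQuadratic _ _ _) (integral_centeredQuadratic _ _ _)
    (integral_centeredQuadratic _ _ _), integral_centeredQuadratic_pow_four,
    integral_centeredQuadratic_pow_four, integral_centeredQuadratic_sq,
    integral_centeredQuadratic_sq, hd2, hd4, hrhs]
  push_cast
  gcongr
  nlinarith [sq_nonneg a]

lemma one_sub_one_div_one_add_sq_pos (ha : 0 < a) : 0 < 1 - 1 / (1 + a) ^ 2 := by
  rw [sub_pos, div_lt_one (by positivity)]
  nlinarith

end ComplexGaussian

theorem complex_gaussian_T_moments_general {Ω : Type*} [MeasureSpace Ω]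
    [IsProbabilityMeasure (ℙ : Measure Ω)]
    {m : ℕ} (lam v : Fin m → ℝ)
    (hlam : ∀ j, 0 ≤ lam j) (hv : ∀ j, 0 ≤ v j)
    (hnz : ∃ j, lam j * v j ≠ 0)
    (Z : Fin m → Ω → ℂ) (hmeas : ∀ j, Measurable (Z j))
    (hindep : iIndepFun Z ℙ)
    (hdist : ∀ j, Measure.map (Z j) ℙ = stdComplexGaussian) :
    (let σ : ℝ := Real.sqrt (∑ j, (1 - 1 / (1 + lam j * v j) ^ 2));
     let T : Ω → ℝ := fun ω => (1 / σ) *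
        ∑ j, (1 - ‖(Real.sqrt (lam j * v j) : ℂ) * Z j ω - 1‖ ^ 2
                    / (1 + lam j * v j));
     (∫ ω, T ω ∂ℙ) = 0 ∧ (∫ ω, T ω ^ 2 ∂ℙ) = 1 ∧ (∫ ω, |T ω| ^ 4 ∂ℙ) ≤ 9) := by
  set Y : Fin m → Ω → ℝ := fun j ω ↦ normSqDeviation (lam j * v j) (Z j ω)
  have ha j : 0 ≤ lam j * v j := mul_nonneg (hlam j) (hv j)
  have hY j : MemLp (Y j) 4 ℙ := memLp_normSqDeviation (ha j) (hmeas j).aemeasurable (hdist j)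
  have hY0 j : ∫ ω, Y j ω = 0 := integral_normSqDeviation (ha j) (hmeas j).aemeasurable (hdist j)
  have hY2 j : ∫ ω, Y j ω ^ 2 = 1 - 1 / (1 + lam j * v j) ^ 2 :=
    integral_normSqDeviation_sq (ha j) (hmeas j).aemeasurable (hdist j)
  have hY4 j : ∫ ω, Y j ω ^ 4 ≤ 9 * (∫ ω, Y j ω ^ 2) ^ 2 :=
    hY2 j ▸ integral_normSqDeviation_pow_four_le (ha j) (hmeas j).aemeasurable (hdist j)
  have hindepY : iIndepFun Y ℙ :=
    hindep.comp _ fun j ↦ (continuous_normSqDeviation (lam j * v j)).measurable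
  obtain ⟨hS2, hS4⟩ := hindepY.integral_sum_sq_and_integral_sum_pow_four_le hY hY0
    (by norm_num) hY4 univ
  have hS0 : ∫ ω, ∑ j, Y j ω = 0 := by
    rw [integral_finsetSum _ fun j _ ↦ (hY j).integrable (by norm_num)]
    simp [hY0]
  have hvar : 0 < ∑ j, (1 - 1 / (1 + lam j * v j) ^ 2) := by
    obtain ⟨j, hj⟩ := hnz
    refine sum_pos' (fun i _ ↦ hY2 i ▸ integral_nonneg fun ω ↦ sq_nonneg _)
      ⟨j, mem_univ j, one_sub_one_div_one_add_sq_pos ((ha j).lt_of_ne' hj)⟩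
  simp only [hY2] at hS2 hS4
  exact moments_one_div_sqrt_mul hvar hS0 hS2 hS4

/-- If `Z₁,…,Z_m` are i.i.d. `CN(0,1)`, the normalized sum
`T = (1/σ) Σ_j (1 − |√(λ_j v_j) Z_j − 1|²/(1+λ_j v_j))`, with
`σ² = Σ_j (1 − (1+λ_j v_j)⁻²)`, has zero mean, unit variance, and fourth moment
at most `9`. -/
theorem complex_gaussian_T_moments {Ω : Type*} [MeasureSpace Ω]
    [IsProbabilityMeasure (ℙ : Measure Ω)]
    {m : ℕ} (hm : 1 ≤ m) (lam v : Fin m → ℝ)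
    (hlam : ∀ j, 0 ≤ lam j) (hv : ∀ j, 0 ≤ v j)
    (hnz : ∃ j, lam j * v j ≠ 0)
    (Z : Fin m → Ω → ℂ) (hmeas : ∀ j, Measurable (Z j))
    (hindep : iIndepFun Z ℙ)
    (hdist : ∀ j, Measure.map (Z j) ℙ = stdComplexGaussian) :
    (let σ : ℝ := Real.sqrt (∑ j, (1 - 1 / (1 + lam j * v j) ^ 2));
     let T : Ω → ℝ := fun ω => (1 / σ) *
        ∑ j, (1 - ‖(Real.sqrt (lam j * v j) : ℂ) * Z j ω - 1‖ ^ 2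
                    / (1 + lam j * v j));
     (∫ ω, T ω ∂ℙ) = 0 ∧ (∫ ω, T ω ^ 2 ∂ℙ) = 1 ∧ (∫ ω, |T ω| ^ 4 ∂ℙ) ≤ 9) :=
  complex_gaussian_T_moments_general lam v hlam hv hnz Z hmeas hindep hdist
end
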